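/- arXiv:2306.14703 — 5 statements merged into one kernel-verified Lean document; each statement's English description precedes it below -/
import Mathlib

section
/- (Kontoyiannis's lemma) For any (not necessarily stationary) process (X_i)_{i∈ℤ} over a D-ary alphabet, E[ 1 / (R^{(1)}_k · P(X₁^k | X₂^∞)) | X_{k+1}^∞ ] ≤ 1 + log D^k almost surely, where P(X₁^k | X₂^∞) denotes the conditional probability of the realized block X₁^k given the realized future X₂^∞. -/
open MeasureTheory ProbabilityTheory Filter Set
open scoped ENNReal NNReal

/-- The Hilberg exponent of a sequence of reals. -/
noncomputable def hilberg (a : ℕ → ℝ) : ℝ :=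
  Filter.limsup (fun k => max 0 (Real.log (a k) / Real.log k)) Filter.atTop

/-- The recurrence time `R⁽¹⁾_k`: the first position `i ≥ 1` such that
`X_{i+1}^{i+k} = X_1^k`, or `∞` if there is none. -/
noncomputable def recTime {Ω A : Type*} (X : ℤ → Ω → A) (k : ℕ) (ω : Ω) : ℕ∞ :=
  sInf {e : ℕ∞ | ∃ i : ℕ, e = (i : ℕ∞) ∧ 1 ≤ i ∧
    ∀ m : ℕ, m < k → X ((i : ℤ) + 1 + (m : ℤ)) ω = X (1 + (m : ℤ)) ω}

/-- The repetition time `R⁽²⁾_k`: the first position `i ≥ 1` such that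
`X_{i+1}^{i+k} = X_{j+1}^{j+k}` for some `0 ≤ j < i`, or `∞` if there is none. -/
noncomputable def repTime {Ω A : Type*} (X : ℤ → Ω → A) (k : ℕ) (ω : Ω) : ℕ∞ :=
  sInf {e : ℕ∞ | ∃ i : ℕ, e = (i : ℕ∞) ∧ 1 ≤ i ∧ ∃ j : ℕ, j < i ∧
    ∀ m : ℕ, m < k → X ((i : ℤ) + 1 + (m : ℤ)) ω = X ((j : ℤ) + 1 + (m : ℤ)) ω}

/-- The longest match length `L⁽¹⁾_n`. -/
noncomputable def matchLen {Ω A : Type*} (X : ℤ → Ω → A) (n : ℕ) (ω : Ω) : ℕ :=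
  sSup ({0} ∪ {k : ℕ | 1 ≤ k ∧ ∃ i : ℕ, 0 < i ∧ i + k ≤ n ∧
    ∀ m : ℕ, m < k → X ((i : ℤ) + 1 + (m : ℤ)) ω = X (1 + (m : ℤ)) ω})

/-- The maximal repetition length `L⁽²⁾_n`. -/
noncomputable def repLen {Ω A : Type*} (X : ℤ → Ω → A) (n : ℕ) (ω : Ω) : ℕ :=
  sSup ({0} ∪ {k : ℕ | 1 ≤ k ∧ ∃ i j : ℕ, j < i ∧ i + k ≤ n ∧
    ∀ m : ℕ, m < k → X ((i : ℤ) + 1 + (m : ℤ)) ω = X ((j : ℤ) + 1 + (m : ℤ)) ω})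

/-- `P(X_1^k)` evaluated at the realized block: the probability that a fresh
sample agrees with `ω` on coordinates `1,…,k`. -/
noncomputable def blockProb {Ω A : Type*} [MeasurableSpace Ω] (μ : Measure Ω)
    (X : ℤ → Ω → A) (k : ℕ) (ω : Ω) : ℝ :=
  (μ {ω' | ∀ m : ℕ, m < k → X (1 + (m : ℤ)) ω' = X (1 + (m : ℤ)) ω}).toReal

/-- The Shannon entropy `H₁(X_1^k) = E[-log P(X_1^k)]`. -/
noncomputable def shannonEnt {Ω A : Type*} [MeasurableSpace Ω] (μ : Measure Ω)
    (X : ℤ → Ω → A) (k : ℕ) : ℝ :=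
  ∫ ω, -Real.log (blockProb μ X k ω) ∂μ

/-- The σ-algebra generated by the future coordinates `X_j, X_{j+1}, …`. -/
def futureSigma {Ω A : Type*} [MeasurableSpace A] (X : ℤ → Ω → A) (j : ℤ) :
    MeasurableSpace Ω :=
  ⨆ i : {i : ℤ // j ≤ i}, MeasurableSpace.comap (X i) inferInstance

/-- `P(X_1^k | X_j^∞)` evaluated at the realized block: the conditional probability,
given the σ-algebra of the future `X_j^∞`, of the block `X_1^k`, evaluated at the
realized value of `X_1^k`. -/
noncomputable def condBlockProb {Ω A : Type*} [MeasurableSpace Ω] [MeasurableSpace A]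
    (μ : Measure Ω) (X : ℤ → Ω → A) (k : ℕ) (j : ℤ) (ω : Ω) : ℝ :=
  ∑' x : Fin k → A,
    ({ω'' | ∀ m : Fin k, X (1 + (m : ℤ)) ω'' = x m}.indicator (fun _ => (1 : ℝ)) ω) *
      (μ[({ω' | ∀ m : Fin k, X (1 + (m : ℤ)) ω' = x m}.indicator fun _ => (1 : ℝ)) |
        futureSigma X j]) ω

/-- The min-entropy `H_∞(X_1^k) = -log max_x P(X_1^k = x)`. -/
noncomputable def minEntropy {Ω A : Type*} [MeasurableSpace Ω] (μ : Measure Ω)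
    (X : ℤ → Ω → A) (k : ℕ) : ℝ :=
  -Real.log (⨆ x : Fin k → A, (μ {ω | ∀ m : Fin k, X (1 + (m : ℤ)) ω = x m}).toReal)

/-- The conditional min-entropy `H_∞(X_1^k | X_{k+1}^{k+i}) = -log E[max_x P(X_1^k = x | X_{k+1}^{k+i})]`,
written as `-log ∑_y max_x P(X_1^k = x, X_{k+1}^{k+i} = y)`. -/
noncomputable def condMinEntropy {Ω A : Type*} [MeasurableSpace Ω] (μ : Measure Ω)
    (X : ℤ → Ω → A) (k i : ℕ) : ℝ :=
  -Real.log (∑' y : Fin i → A, ⨆ x : Fin k → A,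
    (μ {ω | (∀ m : Fin k, X (1 + (m : ℤ)) ω = x m) ∧
      ∀ m : Fin i, X ((k : ℤ) + 1 + (m : ℤ)) ω = y m}).toReal)

/-- The context length `I_k := min {i ≥ 1 : log i ≥ H_∞(X_1^k | X_{k+1}^{k+i})}`. -/
noncomputable def contextLen {Ω A : Type*} [MeasurableSpace Ω] (μ : Measure Ω)
    (X : ℤ → Ω → A) (k : ℕ) : ℕ :=
  sInf {i : ℕ | 1 ≤ i ∧ condMinEntropy μ X k i ≤ Real.log i}

/-- The weighted conditional entropy
`H_•(X_1^k | X_{k+1}^∞) := -log ∑_{i=1}^∞ e^{-H_∞(X_1^k|X_{k+1}^{k+i})}/(i(i+1))`. -/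
noncomputable def weightedCondEntropy {Ω A : Type*} [MeasurableSpace Ω] (μ : Measure Ω)
    (X : ℤ → Ω → A) (k : ℕ) : ℝ :=
  -Real.log (∑' i : ℕ,
    Real.exp (-condMinEntropy μ X k (i + 1)) / ((i + 1) * (i + 2)))

/-- The median of a real random variable: `sup {r : P(X < r) ≤ 1/2}`. -/
noncomputable def medianOf {Ω : Type*} [MeasurableSpace Ω] (μ : Measure Ω) (f : Ω → ℝ) : ℝ :=
  sSup {r : ℝ | (μ {ω | f ω < r}).toReal ≤ 1 / 2}

/-! Condition first on the larger σ-algebra `σ(X₂^∞)`. On the event `X₁^k = x` the integrand is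
`1 / (R_x · P(x | X₂^∞))`, where the recurrence time `R_x` of the fixed block `x` is a function of
`X₂^∞`; pulling it out gives `E[· | X₂^∞] = ∑_x P(x | X₂^∞) / (R_x · P(x | X₂^∞)) ≤ ∑_x 1 / R_x`.
Given the future, distinct blocks recur at distinct times `R_x ≥ 1`, so the sum is dominated by the
harmonic number of `D^k`, hence by `1 + log D^k`. For `k ≥ 1` the tower property transfers the bound
to `σ(X_{k+1}^∞) ≤ σ(X₂^∞)`; for `k = 0` the integrand is identically `1`. -/

theorem harmonic_monotone : Monotone harmonic :=
  monotone_nat_of_le_succ fun n => by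
    rw [harmonic_succ]
    exact le_add_of_nonneg_right (by positivity)

theorem sum_inv_le_harmonic_card {S : Finset ℕ} (hS : 0 ∉ S) :
    ∑ i ∈ S, (i : ℝ)⁻¹ ≤ harmonic S.card := by
  induction S using Finset.induction_on_max with
  | empty => simp
  | insert a s hlt ih =>
    have ha : a ∉ s := fun h => (hlt a h).false
    have h0s : 0 ∉ s := fun h => hS (Finset.mem_insert_of_mem h)
    have hcard : s.card + 1 ≤ a := by
      have hsub : s ⊆ Finset.Ioo 0 a := fun x hx =>
        Finset.mem_Ioo.2 ⟨Nat.pos_of_ne_zero (ne_of_mem_of_not_mem hx h0s), hlt x hx⟩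
      have := Finset.card_le_card hsub
      rw [Nat.card_Ioo] at this
      have : a ≠ 0 := fun h => hS (h ▸ Finset.mem_insert_self a s)
      omega
    rw [Finset.sum_insert ha, Finset.card_insert_of_notMem ha, harmonic_succ]
    push_cast
    rw [add_comm]
    gcongr
    · exact ih h0s
    · exact_mod_cast hcard

theorem sum_inv_le_one_add_log_card {ι : Type*} (s : Finset ι) {f : ι → ℕ}
    (hf : Set.InjOn f {x | f x ≠ 0}) :
    ∑ x ∈ s, (f x : ℝ)⁻¹ ≤ 1 + Real.log s.card := by
  classical
  set t := s.filter (fun x => f x ≠ 0)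
  have hsum : ∑ x ∈ s, (f x : ℝ)⁻¹ = ∑ i ∈ t.image f, (i : ℝ)⁻¹ := by
    have hinj : Set.InjOn f t := fun x hx y hy =>
      hf (Finset.mem_filter.1 hx).2 (Finset.mem_filter.1 hy).2
    rw [Finset.sum_image hinj]
    exact (Finset.sum_filter_of_ne (p := fun x => f x ≠ 0) fun x _ hx h0 => hx (by simp [h0])).symm
  have hzero : 0 ∉ t.image f := by simp [t]
  have hcard : (t.image f).card ≤ s.card := Finset.card_image_le.trans (Finset.card_filter_le _ _)
  calc ∑ x ∈ s, (f x : ℝ)⁻¹ ≤ harmonic (t.image f).card := hsum ▸ sum_inv_le_harmonic_card hzero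
    _ ≤ harmonic s.card := by exact_mod_cast harmonic_monotone hcard
    _ ≤ 1 + Real.log s.card := harmonic_le_one_add_log _

theorem ENat.sInf_image_natCast_eq_natCast_iff {S : Set ℕ} {n : ℕ} :
    sInf (((↑) : ℕ → ℕ∞) '' S) = n ↔ IsLeast S n := by
  refine ⟨fun h => ?_, fun h => (Nat.mono_cast.map_isLeast h).csInf_eq⟩
  have hne : S.Nonempty := Set.nonempty_iff_ne_empty.2 <| by rintro rfl; simp at h
  obtain ⟨i, hi, hin⟩ := csInf_mem (hne.image ((↑) : ℕ → ℕ∞))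
  rw [h, Nat.cast_inj] at hin
  refine ⟨hin ▸ hi, fun j hj => ?_⟩
  have := sInf_le (Set.mem_image_of_mem ((↑) : ℕ → ℕ∞) hj)
  rw [h] at this
  exact_mod_cast this

theorem measurable_sInf_image_natCast {Ω : Type*} [MeasurableSpace Ω] {T : ℕ → Set Ω}
    (hT : ∀ i, MeasurableSet (T i)) :
    Measurable fun ω => sInf (((↑) : ℕ → ℕ∞) '' {i | ω ∈ T i}) := by
  refine measurable_to_countable' fun e => ?_
  induction e using ENat.recTopCoe with
  | top =>
    have : (fun ω => sInf (((↑) : ℕ → ℕ∞) '' {i | ω ∈ T i})) ⁻¹' {⊤} = ⋂ i, (T i)ᶜ := by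
      ext ω
      simp [sInf_eq_top]
    exact this ▸ MeasurableSet.iInter fun i => (hT i).compl
  | coe n =>
    have : (fun ω => sInf (((↑) : ℕ → ℕ∞) '' {i | ω ∈ T i})) ⁻¹' {(n : ℕ∞)}
        = T n ∩ ⋂ j < n, (T j)ᶜ := by
      ext ω
      simp only [Set.mem_preimage, Set.mem_singleton_iff, ENat.sInf_image_natCast_eq_natCast_iff,
        IsLeast, lowerBounds, Set.mem_ofPred_eq, Set.mem_inter_iff, Set.mem_iInter, Set.mem_compl_iff]
      exact and_congr_right fun _ =>
        ⟨fun h j hj hjT => (h hjT).not_gt hj, fun h j hjT => not_lt.1 fun hj => h j hj hjT⟩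
    exact this ▸ (hT n).inter (MeasurableSet.biInter (Set.to_countable _) fun j _ => (hT j).compl)

theorem condExp_comp_eq_sum_mul_condExp_indicator {Ω ι : Type*} [Fintype ι]
    {m m0 : MeasurableSpace Ω} {μ : Measure Ω} [IsFiniteMeasure μ] {Y : Ω → ι}
    (hY : ∀ x, MeasurableSet (Y ⁻¹' {x})) {H : ι → Ω → ℝ} (hH : ∀ x, StronglyMeasurable[m] (H x))
    (hint : Integrable (fun ω => H (Y ω) ω) μ) :
    μ[fun ω => H (Y ω) ω | m] =ᵐ[μ]
      fun ω => ∑ x, H x ω * μ[(Y ⁻¹' {x}).indicator fun _ => 1 | m] ω := by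
  classical
  have hterm : ∀ x, H x * (Y ⁻¹' {x}).indicator (fun _ => 1) =
      (Y ⁻¹' {x}).indicator fun ω => H (Y ω) ω := fun x => by
    ext ω
    by_cases hω : Y ω = x <;> simp [hω]
  have hsplit : (fun ω => H (Y ω) ω) = ∑ x, H x * (Y ⁻¹' {x}).indicator (fun _ => 1) := by
    ext ω
    simp [hterm, Finset.sum_apply, Set.indicator_apply]
  have hpull : ∀ x, μ[H x * (Y ⁻¹' {x}).indicator (fun _ => 1) | m] =ᵐ[μ]
      H x * μ[(Y ⁻¹' {x}).indicator (fun _ => 1) | m] := fun x =>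
    condExp_mul_of_stronglyMeasurable_left (hH x) (hterm x ▸ hint.indicator (hY x))
      ((integrable_const 1).indicator (hY x))
  have hsum := condExp_finsetSum (s := Finset.univ) (μ := μ)
    (fun x _ => hterm x ▸ hint.indicator (hY x)) m
  rw [← hsplit] at hsum
  filter_upwards [hsum, ae_all_iff.2 hpull] with ω hω hωx
  simp [hω, Finset.sum_apply, hωx]

theorem one_div_mul_mul_le_inv {a p : ℝ} (ha : 0 ≤ a) (hp : 0 ≤ p) : 1 / (a * p) * p ≤ a⁻¹ := by
  rcases hp.eq_or_lt with rfl | hp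
  · simpa using ha
  · rw [one_div, mul_inv, mul_assoc, inv_mul_cancel₀ hp.ne', mul_one]

theorem condExp_le_const_of_condExp_le {Ω : Type*} {m₁ m₂ m0 : MeasurableSpace Ω}
    {μ : Measure Ω} [IsFiniteMeasure μ] (hm₁₂ : m₁ ≤ m₂) (hm₂ : m₂ ≤ m0) {f : Ω → ℝ} {c : ℝ}
    (h : μ[f | m₂] ≤ᵐ[μ] fun _ => c) : μ[f | m₁] ≤ᵐ[μ] fun _ => c := by
  have hmono := condExp_mono (m := m₁) integrable_condExp (integrable_const c) h
  rw [condExp_const (hm₁₂.trans hm₂)] at hmono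
  filter_upwards [condExp_condExp_of_le (f := f) hm₁₂ hm₂, hmono] with ω htower hle
  exact htower ▸ hle

section RecurrenceTime

variable {Ω A : Type*} {X : ℤ → Ω → A}

theorem measurable_futureSigma [MeasurableSpace A] {j i : ℤ} (h : j ≤ i) :
    Measurable[futureSigma X j] (X i) :=
  Measurable.of_comap_le <| le_iSup (fun i : {i : ℤ // j ≤ i} => MeasurableSpace.comap (X i) _) ⟨i, h⟩

theorem futureSigma_antitone [MeasurableSpace A] : Antitone (futureSigma X) :=
  fun _ _ hjj' => iSup_le fun i => measurable_futureSigma (hjj'.trans i.2) |>.comap_le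

theorem futureSigma_le [MeasurableSpace Ω] [MeasurableSpace A] (hX : ∀ i, Measurable (X i))
    (j : ℤ) : futureSigma X j ≤ ‹MeasurableSpace Ω› :=
  iSup_le fun i => (hX i).comap_le

def block (X : ℤ → Ω → A) (k : ℕ) (ω : Ω) : Fin k → A := fun m => X (1 + m) ω

/-- The paper's `R_x`. When `x` never recurs this is `⊤`, whose `toNat` is `0`, matching `recTime`. -/
noncomputable def hitTime (X : ℤ → Ω → A) (k : ℕ) (x : Fin k → A) (ω : Ω) : ℕ∞ :=
  sInf (((↑) : ℕ → ℕ∞) '' {i | 1 ≤ i ∧ ∀ m : Fin k, X (i + 1 + m) ω = x m})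

theorem recTime_eq_hitTime_block (k : ℕ) (ω : Ω) :
    recTime X k ω = hitTime X k (block X k ω) ω := by
  unfold recTime hitTime block
  congr 1
  ext e
  simp only [Set.mem_ofPred_eq, Set.mem_image, Fin.forall_iff]
  exact ⟨fun ⟨i, he, hi⟩ => ⟨i, hi, he.symm⟩, fun ⟨i, hi, he⟩ => ⟨i, he.symm, hi⟩⟩

theorem recTime_zero (ω : Ω) : recTime X 0 ω = 1 := by
  rw [recTime_eq_hitTime_block, hitTime, show (1 : ℕ∞) = (1 : ℕ) from rfl,
    ENat.sInf_image_natCast_eq_natCast_iff]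
  simp [IsLeast, lowerBounds]

theorem hitTime_toNat_injOn (k : ℕ) (ω : Ω) :
    Set.InjOn (fun x => (hitTime X k x ω).toNat) {x | (hitTime X k x ω).toNat ≠ 0} := by
  have hmem : ∀ x, (hitTime X k x ω).toNat ≠ 0 →
      ∀ m : Fin k, X ((hitTime X k x ω).toNat + 1 + m) ω = x m := fun x hx =>
    have hfin : hitTime X k x ω = (hitTime X k x ω).toNat :=
      (ENat.natCast_toNat fun h => hx (by rw [h, ENat.toNat_top])).symm
    (ENat.sInf_image_natCast_eq_natCast_iff.1 hfin).1.2
  intro x hx y hy hxy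
  funext m
  rw [← hmem x hx m, ← hmem y hy m]
  simp only at hxy
  rw [hxy]

theorem sum_one_div_hitTime_mul_mul_le [Fintype A] (k : ℕ) (ω : Ω) {p : (Fin k → A) → ℝ}
    (hp : ∀ x, 0 ≤ p x) :
    ∑ x, 1 / (((hitTime X k x ω).toNat : ℝ) * p x) * p x
      ≤ 1 + Real.log ((Fintype.card A : ℝ) ^ k) :=
  calc ∑ x, 1 / (((hitTime X k x ω).toNat : ℝ) * p x) * p x
        ≤ ∑ x, ((hitTime X k x ω).toNat : ℝ)⁻¹ :=
        Finset.sum_le_sum fun x _ => one_div_mul_mul_le_inv (Nat.cast_nonneg _) (hp x)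
    _ ≤ 1 + Real.log (Finset.univ : Finset (Fin k → A)).card :=
        sum_inv_le_one_add_log_card _ (hitTime_toNat_injOn k ω)
    _ = 1 + Real.log ((Fintype.card A : ℝ) ^ k) := by simp

theorem measurable_hitTime [MeasurableSpace A] [MeasurableSingletonClass A] {m : MeasurableSpace Ω}
    (hX : ∀ i, 2 ≤ i → Measurable[m] (X i)) (k : ℕ) (x : Fin k → A) :
    Measurable[m] (hitTime X k x) := by
  refine measurable_sInf_image_natCast
    (T := fun i => {ω | 1 ≤ i ∧ ∀ m : Fin k, X (i + 1 + m) ω = x m}) fun i => ?_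
  by_cases hi : 1 ≤ i
  · simp only [hi, true_and, Set.ofPred_forall]
    exact MeasurableSet.iInter fun j =>
      hX ((i : ℤ) + 1 + ((j : ℕ) : ℤ)) (by omega) (measurableSet_singleton (x j))
  · simp only [hi, false_and, Set.ofPred_false, MeasurableSet.empty]

end RecurrenceTime

section BlockProbability

variable {Ω A : Type*} [MeasurableSpace Ω] [MeasurableSpace A] {X : ℤ → Ω → A}

theorem measurableSet_block_preimage [MeasurableSingletonClass A] (hX : ∀ i, Measurable (X i))
    (k : ℕ) (x : Fin k → A) : MeasurableSet (block X k ⁻¹' {x}) :=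
  measurable_pi_lambda _ (fun _ => hX _) (measurableSet_singleton x)

theorem condBlockProb_eq (μ : Measure Ω) (k : ℕ) (j : ℤ) (ω : Ω) :
    condBlockProb μ X k j ω =
      μ[(block X k ⁻¹' {block X k ω}).indicator fun _ => 1 | futureSigma X j] ω := by
  have hset : ∀ x : Fin k → A, {ω' | ∀ m : Fin k, X (1 + m) ω' = x m} = block X k ⁻¹' {x} :=
    fun x => by ext; simp [block, funext_iff]
  rw [condBlockProb, tsum_eq_single (block X k ω)]
  · simp [hset]
  · intro x hx
    simp [hset, Ne.symm hx]

theorem condBlockProb_zero (μ : Measure Ω) [IsFiniteMeasure μ] (hX : ∀ i, Measurable (X i))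
    (j : ℤ) (ω : Ω) : condBlockProb μ X 0 j ω = 1 := by
  have huniv : block X 0 ⁻¹' {block X 0 ω} = Set.univ :=
    Set.eq_univ_of_forall fun _ => Subsingleton.elim _ _
  rw [condBlockProb_eq, huniv, Set.indicator_univ, condExp_const (futureSigma_le hX j)]

end BlockProbability

theorem condExp_inv_recTime_mul_condBlockProb_le {Ω A : Type*} [MeasurableSpace Ω]
    [MeasurableSpace A] [MeasurableSingletonClass A] [Fintype A] (μ : Measure Ω)
    [IsFiniteMeasure μ] {X : ℤ → Ω → A} (hX : ∀ i, Measurable (X i)) (k : ℕ) :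
    μ[fun ω => 1 / (((recTime X k ω).toNat : ℝ) * condBlockProb μ X k 2 ω) | futureSigma X 2]
      ≤ᵐ[μ] fun _ => 1 + Real.log ((Fintype.card A : ℝ) ^ k) := by
  set P : (Fin k → A) → Ω → ℝ :=
    fun x => μ[(block X k ⁻¹' {x}).indicator fun _ => 1 | futureSigma X 2]
  set R : (Fin k → A) → Ω → ℕ := fun x ω => (hitTime X k x ω).toNat
  have hf : (fun ω => 1 / (((recTime X k ω).toNat : ℝ) * condBlockProb μ X k 2 ω)) =
      fun ω => (fun x ω => 1 / ((R x ω : ℝ) * P x ω)) (block X k ω) ω := by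
    funext ω
    rw [recTime_eq_hitTime_block, condBlockProb_eq]
  have hlog : 0 ≤ 1 + Real.log ((Fintype.card A : ℝ) ^ k) := by
    have := Real.log_natCast_nonneg (Fintype.card A ^ k)
    push_cast at this
    linarith
  rw [hf]
  by_cases hint : Integrable (fun ω => 1 / ((R (block X k ω) ω : ℝ) * P (block X k ω) ω)) μ
  swap
  · rw [condExp_of_not_integrable hint]
    exact ae_of_all _ fun _ => hlog
  have hR : ∀ x, Measurable[futureSigma X 2] fun ω => (R x ω : ℝ) := fun x =>
    (Measurable.of_discrete (f := fun e : ℕ∞ => (e.toNat : ℝ))).comp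
      (measurable_hitTime (X := X) (fun _ hi => measurable_futureSigma hi) k x)
  have hH : ∀ x, StronglyMeasurable[futureSigma X 2] fun ω => 1 / ((R x ω : ℝ) * P x ω) :=
    fun x => Measurable.stronglyMeasurable <|
      measurable_const.div ((hR x).mul stronglyMeasurable_condExp.measurable)
  have hP : ∀ᵐ ω ∂μ, ∀ x, 0 ≤ P x ω := ae_all_iff.2 fun x =>
    condExp_nonneg (ae_of_all _ fun ω => Set.indicator_nonneg (fun _ _ => zero_le_one) ω)
  filter_upwards [condExp_comp_eq_sum_mul_condExp_indicator
    (measurableSet_block_preimage hX k) hH hint, hP] with ω hω hPω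
  exact hω ▸ sum_one_div_hitTime_mul_mul_le k ω hPω

/-- **Kontoyiannis's lemma.** For any process over a `D`-ary alphabet,
`E[1/(R⁽¹⁾_k · P(X₁^k|X₂^∞)) | X_{k+1}^∞] ≤ 1 + log D^k` almost surely. -/
theorem kontoyiannis_lemma {Ω A : Type*} [MeasurableSpace Ω] [MeasurableSpace A]
    [MeasurableSingletonClass A] [Fintype A]
    (μ : Measure Ω) [IsProbabilityMeasure μ] (X : ℤ → Ω → A) (hXmeas : ∀ i, Measurable (X i))
    (k : ℕ) :
    ∀ᵐ ω ∂μ,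
      (μ[fun ω' => 1 / (((recTime X k ω').toNat : ℝ) * condBlockProb μ X k 2 ω') |
          futureSigma X ((k : ℤ) + 1)]) ω
        ≤ 1 + Real.log ((Fintype.card A : ℝ) ^ k) := by
  rcases Nat.eq_zero_or_pos k with rfl | hk
  · have hone : (fun ω => 1 / (((recTime X 0 ω).toNat : ℝ) * condBlockProb μ X 0 2 ω)) =
        fun _ => 1 := by
      funext ω
      simp [recTime_zero, condBlockProb_zero μ hXmeas]
    rw [hone, condExp_const (futureSigma_le hXmeas _)]
    exact ae_of_all _ fun _ => by simp
  · exact condExp_le_const_of_condExp_le (futureSigma_antitone (by omega))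
      (futureSigma_le hXmeas 2) (condExp_inv_recTime_mul_condBlockProb_le μ hXmeas k)
end

section
/- Let (X_i)_{i∈ℤ} be a stationary ergodic process over a D-ary alphabet and let (ρ_k)_{k≥1} be positive numbers with ∑_{k=1}^∞ ρ_k < ∞. Then almost surely, for all sufficiently large k, -log P(X₁^k | X_{k+1}^∞) + log ρ_k - log k < log R^{(1)}_k < -log P(X₁^k) - log ρ_k. -/
open MeasureTheory ProbabilityTheory Filter Set
open scoped ENNReal NNReal

/-!
Upper bound: `R_k ≤ i` as soon as the shift returns to the cylinder of `X_1^k` within `i` steps.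
For the set `B` of points of a cylinder `S` that do not return to `S` within `n - 1` steps, the
sets `T^{-j} B`, `j < n`, are disjoint and, `T` preserving `μ`, of equal measure, so `μ B ≤ 1/n`.
With `n = ⌈1/(P(x) ρ_k)⌉`, summed over the blocks `x`, the upper bound fails with probability at
most `ρ_k`.

Lower bound: write `Q = P(X_1^k | X_{k+1}^∞)`. On `{R_k = r}` the block `X_1^k` can be read off
the future: for `r < k` it is `r`-periodic and hence the periodic extension of `X_{k+1}^{k+r}`,
for `r ≥ k` it equals `X_{r+1}^{r+k}`, a block occurring there for the first time after `k`.
Since `P(X_1^k = x, G) = E[Q(x); G]` for future events `G`, the event `Q ≤ ρ_k/(k r)` has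
probability at most `ρ_k/(k r)` in the first case, and in the second case only the at most `D^k`
first-occurrence positions `r` contribute, with harmonic sum at most `1 + k log D`. So both bounds
fail with probability at most `(3 + log D) ρ_k`, and Borel–Cantelli concludes.
-/

namespace Recurrence

open Finset in
theorem sum_inv_le_sum_range_card (S : Finset ℕ) (hS : 0 ∉ S) :
    ∑ i ∈ S, (i : ℝ)⁻¹ ≤ ∑ j ∈ range #S, ((j : ℝ) + 1)⁻¹ := by
  classical
  induction S using Finset.induction_on_max with
  | empty => simp
  | insert a s hlt ih =>
    have ha : a ∉ s := fun h => (hlt a h).false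
    have hs : s ⊆ Ico 1 a := fun x hx => mem_Ico.2
      ⟨Nat.one_le_iff_ne_zero.2 fun h => hS (h ▸ mem_insert_of_mem hx), hlt x hx⟩
    have hcard : #s + 1 ≤ a := by
      have hle := Finset.card_le_card hs
      have : a ≠ 0 := fun h => hS (h ▸ mem_insert_self a s)
      rw [Nat.card_Ico] at hle
      omega
    rw [sum_insert ha, card_insert_of_notMem ha, sum_range_succ, add_comm]
    gcongr
    · exact ih fun h => hS (mem_insert_of_mem h)
    · exact_mod_cast hcard

theorem sum_inv_le_one_add_log (S : Finset ℕ) (hS : 0 ∉ S) {n : ℕ} (hn : S.card ≤ n) :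
    ∑ i ∈ S, (i : ℝ)⁻¹ ≤ 1 + Real.log n := by
  calc ∑ i ∈ S, (i : ℝ)⁻¹ ≤ ∑ j ∈ Finset.range S.card, ((j : ℝ) + 1)⁻¹ :=
        sum_inv_le_sum_range_card S hS
    _ ≤ ∑ j ∈ Finset.range n, ((j : ℝ) + 1)⁻¹ :=
        Finset.sum_le_sum_of_subset_of_nonneg (Finset.range_subset_range.2 hn)
          fun _ _ _ => by positivity
    _ = harmonic n := by simp [harmonic]
    _ ≤ 1 + Real.log n := by exact_mod_cast harmonic_le_one_add_log n

theorem tsum_indicator_inv_le {β : Type*} [Fintype β] {N : Set ℕ} {g : ℕ → β}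
    (hg : Set.InjOn g N) (h0 : 0 ∉ N) :
    ∑' r, N.indicator (fun r => ENNReal.ofReal (r : ℝ)⁻¹) r
      ≤ ENNReal.ofReal (1 + Real.log (Fintype.card β)) := by
  have hN : N.Finite := Set.Finite.of_injOn (Set.mapsTo_univ g N) hg Set.finite_univ
  rw [tsum_eq_sum (s := hN.toFinset) fun r hr => Set.indicator_of_notMem (by simpa using hr) _,
    Finset.sum_congr rfl fun r hr => Set.indicator_of_mem (hN.mem_toFinset.1 hr) _,
    ← ENNReal.ofReal_sum_of_nonneg fun _ _ => by positivity]
  refine ENNReal.ofReal_le_ofReal (sum_inv_le_one_add_log _ (by simpa using h0) ?_)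
  exact (Finset.card_le_card_of_injOn g (fun _ _ => Finset.mem_univ _) (by simpa using hg)).trans
    Finset.card_univ.le

section MeasureTheory

variable {Ω : Type*} {m m₀ : MeasurableSpace Ω} {μ : Measure Ω}

theorem measure_inter_forall_iterate_notMem_le [IsProbabilityMeasure μ] {T : Ω → Ω}
    (hT : MeasurePreserving T μ μ) {S : Set Ω} (hS : MeasurableSet S) (n : ℕ) :
    μ (S ∩ {ω | ∀ i, 1 ≤ i → i < n → T^[i] ω ∉ S}) ≤ (n : ℝ≥0∞)⁻¹ := by
  set B := S ∩ {ω | ∀ i, 1 ≤ i → i < n → T^[i] ω ∉ S}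
  have hB : MeasurableSet B := by
    refine hS.inter ?_
    simp only [Set.ofPred_forall]
    exact .iInter fun i => .iInter fun _ => .iInter fun _ =>
      hT.measurable.iterate i hS.compl
  -- a point of `T^{-j} B ∩ T^{-j'} B`, `j < j'`, would return to `S` after `j' - j < n` steps
  have hdisj : Pairwise (Function.onFun Disjoint fun j : Fin n => T^[j] ⁻¹' B) := by
    refine (pairwise_disjoint_on _).2 fun j j' hjj' => Set.disjoint_left.2 fun ω hj hj' => ?_
    have hret : T^[j' - j] (T^[j] ω) = T^[j'] ω := by
      rw [← Function.iterate_add_apply, Nat.sub_add_cancel (Fin.le_of_lt hjj')]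
    exact (hj : T^[j] ω ∈ B).2 (j' - j) (by omega) (by omega) (hret ▸ (hj' : T^[j'] ω ∈ B).1)
  have hsum : (n : ℝ≥0∞) * μ B ≤ 1 := by
    calc (n : ℝ≥0∞) * μ B = ∑ j : Fin n, μ (T^[j] ⁻¹' B) := by
          simp [(hT.iterate _).measure_preimage hB.nullMeasurableSet]
      _ = μ (⋃ j : Fin n, T^[j] ⁻¹' B) := by
          rw [measure_iUnion hdisj fun j => hT.measurable.iterate j hB, tsum_fintype]
      _ ≤ 1 := prob_le_one
  rwa [ENNReal.le_inv_iff_mul_le, mul_comm]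

theorem measure_inter_forall_iterate_notMem_le_ofReal [IsProbabilityMeasure μ] {T : Ω → Ω}
    (hT : MeasurePreserving T μ μ) {S : Set Ω} (hS : MeasurableSet S) {ρ : ℝ} (hρ : 0 < ρ) :
    μ (S ∩ {ω | ∀ i, 1 ≤ i → i < ⌈(μ.real S * ρ)⁻¹⌉₊ → T^[i] ω ∉ S})
      ≤ ENNReal.ofReal ρ * μ S := by
  rcases eq_or_ne (μ S) 0 with h0 | h0
  · exact (measure_mono Set.inter_subset_left).trans (by simp [h0])
  have hpos : 0 < μ.real S * ρ := mul_pos (ENNReal.toReal_pos h0 (measure_ne_top μ S)) hρ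
  calc _ ≤ ((⌈(μ.real S * ρ)⁻¹⌉₊ : ℕ) : ℝ≥0∞)⁻¹ := measure_inter_forall_iterate_notMem_le hT hS _
    _ ≤ (ENNReal.ofReal (μ.real S * ρ)⁻¹)⁻¹ := by
        gcongr
        rw [← ENNReal.ofReal_natCast]
        exact ENNReal.ofReal_le_ofReal (Nat.le_ceil _)
    _ = ENNReal.ofReal ρ * μ S := by
        rw [← ENNReal.ofReal_inv_of_pos (inv_pos.2 hpos), inv_inv, mul_comm,
          ENNReal.ofReal_mul hρ.le, ofReal_measureReal]

theorem measure_inter_eq_setLIntegral_condExp (hm : m ≤ m₀) [IsFiniteMeasure μ] {s G : Set Ω}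
    (hs : MeasurableSet[m₀] s) (hG : MeasurableSet[m] G) :
    μ (s ∩ G) = ∫⁻ ω in G, ENNReal.ofReal (μ[s.indicator fun _ => (1 : ℝ) | m] ω) ∂μ := by
  rw [← ofReal_integral_eq_lintegral_ofReal integrable_condExp.restrict
      (ae_restrict_of_ae (condExp_nonneg (ae_of_all _ fun _ => Set.indicator_nonneg
        (fun _ _ => zero_le_one) _))),
    setIntegral_condExp hm ((integrable_const 1).indicator hs) hG,
    integral_indicator_const _ hs, smul_eq_mul, mul_one,
    measureReal_restrict_apply hs, ofReal_measureReal]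

theorem measure_iUnion_inter_le_of_condExp_le [IsProbabilityMeasure μ] (hm : m ≤ m₀)
    {ι : Type*} [Fintype ι] {s G : ι → Set Ω} (hs : ∀ i, MeasurableSet[m₀] (s i))
    (hG : ∀ i, MeasurableSet[m] (G i)) (hdisj : Pairwise (Function.onFun Disjoint G)) {c : ℝ}
    (hc : ∀ i, ∀ ω ∈ G i, μ[(s i).indicator fun _ => (1 : ℝ) | m] ω ≤ c) :
    μ (⋃ i, s i ∩ G i) ≤ ENNReal.ofReal c :=
  calc μ (⋃ i, s i ∩ G i) ≤ ∑ i, μ (s i ∩ G i) := measure_iUnion_fintype_le _ _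
    _ ≤ ∑ i, ENNReal.ofReal c * μ (G i) := by
        refine Finset.sum_le_sum fun i _ => ?_
        rw [measure_inter_eq_setLIntegral_condExp hm (hs i) (hG i), ← setLIntegral_const]
        exact setLIntegral_mono' (hm _ (hG i)) fun ω hω => ENNReal.ofReal_le_ofReal (hc i ω hω)
    _ = ENNReal.ofReal c * μ (⋃ i, G i) := by
        rw [← Finset.mul_sum, measure_iUnion hdisj fun i => hm _ (hG i), tsum_fintype]
    _ ≤ ENNReal.ofReal c := mul_le_of_le_one_right' prob_le_one

end MeasureTheory

section Blocks

variable {Ω A : Type*} {X : ℤ → Ω → A} {k : ℕ}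

def window (X : ℤ → Ω → A) (k : ℕ) (j : ℤ) (ω : Ω) : Fin k → A := fun m => X (j + m) ω

def cyl (X : ℤ → Ω → A) (k : ℕ) (x : Fin k → A) : Set Ω :=
  {ω | ∀ m : Fin k, X (1 + m) ω = x m}

theorem mem_cyl_iff {x : Fin k → A} {ω : Ω} : ω ∈ cyl X k x ↔ window X k 1 ω = x := by
  simp [cyl, window, funext_iff]

theorem pairwise_disjoint_cyl : Pairwise (Function.onFun Disjoint (cyl X k)) :=
  fun _ _ hxy => Set.disjoint_left.2 fun _ hx hy =>
    hxy ((mem_cyl_iff.1 hx).symm.trans (mem_cyl_iff.1 hy))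

theorem window_eq_window_iff {i j : ℤ} {ω ω' : Ω} :
    window X k i ω = window X k j ω' ↔ ∀ m : ℕ, m < k → X (i + m) ω = X (j + m) ω' := by
  simp [window, funext_iff, Fin.forall_iff]

theorem apply_iterate_of_shift {T : Ω → Ω} (hshift : ∀ i ω, X i (T ω) = X (i + 1) ω)
    (n : ℕ) (i : ℤ) (ω : Ω) : X i (T^[n] ω) = X (i + n) ω := by
  induction n generalizing ω with
  | zero => simp
  | succ n ih => rw [Function.iterate_succ_apply, ih, hshift]; push_cast; ring_nf

theorem window_iterate_of_shift {T : Ω → Ω} (hshift : ∀ i ω, X i (T ω) = X (i + 1) ω)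
    (n : ℕ) (j : ℤ) (ω : Ω) : window X k j (T^[n] ω) = window X k (j + n) ω := by
  funext m
  simp only [window, apply_iterate_of_shift hshift]
  ring_nf

theorem recTime_le {i : ℕ} {ω : Ω} (hi : 1 ≤ i)
    (h : window X k (i + 1) ω = window X k 1 ω) : recTime X k ω ≤ i :=
  sInf_le ⟨i, rfl, hi, window_eq_window_iff.1 h⟩

theorem recTime_eq_coe {r : ℕ} {ω : Ω} (h : recTime X k ω = r) :
    1 ≤ r ∧ window X k (r + 1) ω = window X k 1 ω ∧
      ∀ j : ℕ, 1 ≤ j → window X k (j + 1) ω = window X k 1 ω → r ≤ j := by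
  unfold recTime at h
  set S := {e : ℕ∞ | ∃ i : ℕ, e = (i : ℕ∞) ∧ 1 ≤ i ∧
    ∀ m : ℕ, m < k → X ((i : ℤ) + 1 + (m : ℤ)) ω = X (1 + (m : ℤ)) ω}
  rcases S.eq_empty_or_nonempty with hS | hS
  · simp [hS] at h
  obtain ⟨i, hi, h1, hmatch⟩ := csInf_mem hS
  rw [h, Nat.cast_inj] at hi
  subst hi
  refine ⟨h1, window_eq_window_iff.2 hmatch, fun j hj hjm => ?_⟩
  have : sInf S ≤ j := csInf_le (OrderBot.bddBelow S) ⟨j, rfl, hj, window_eq_window_iff.1 hjm⟩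
  exact_mod_cast h ▸ this

def BlockPeriodic (r : ℕ) (x : Fin k → A) : Prop :=
  ∀ m m' : Fin k, (m' : ℕ) = m + r → x m' = x m

theorem BlockPeriodic.eq_of_eqOn_tail {r : ℕ} (hr : 0 < r) {x y : Fin k → A}
    (hx : BlockPeriodic r x) (hy : BlockPeriodic r y) (h : ∀ m : Fin k, k ≤ r + m → x m = y m) :
    x = y := by
  funext m
  induction hn : k - m using Nat.strong_induction_on generalizing m with
  | _ n ih =>
    by_cases hm : k ≤ r + m
    · exact h m hm
    · let m' : Fin k := ⟨m + r, by omega⟩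
      rw [← hx m m' rfl, ← hy m m' rfl]
      exact ih (k - m') (by simp [m']; omega) m' rfl

theorem blockPeriodic_window {r : ℕ} {ω : Ω}
    (h : window X k (r + 1) ω = window X k 1 ω) : BlockPeriodic r (window X k 1 ω) := by
  intro m m' hm'
  conv_rhs => rw [← h]
  simp only [window, hm']
  push_cast
  ring_nf

def IsFirstOccurrence (X : ℤ → Ω → A) (k r : ℕ) (ω : Ω) : Prop :=
  k ≤ r ∧ ∀ j, k ≤ j → j < r → window X k (j + 1) ω ≠ window X k (r + 1) ω

theorem injOn_window_isFirstOccurrence (ω : Ω) :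
    Set.InjOn (fun r : ℕ => window X k (r + 1) ω) {r | IsFirstOccurrence X k r ω} := by
  intro r hr r' hr' h
  by_contra hne
  rcases lt_or_gt_of_ne hne with hlt | hlt
  · exact hr'.2 r hr.1 hlt h
  · exact hr.2 r' hr'.1 hlt h.symm

end Blocks

section Measurability

variable {Ω A : Type*} [MeasurableSpace A] {X : ℤ → Ω → A} {k : ℕ}

theorem futureSigma_le [MeasurableSpace Ω] (hX : ∀ i, Measurable (X i)) (j : ℤ) :
    futureSigma X j ≤ ‹MeasurableSpace Ω› :=
  iSup_le fun i => (hX i).comap_le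

theorem measurable_futureSigma {i j : ℤ} (h : j ≤ i) : Measurable[futureSigma X j] (X i) :=
  Measurable.of_comap_le <|
    le_iSup (fun i : {i : ℤ // j ≤ i} => MeasurableSpace.comap (X i) inferInstance) ⟨i, h⟩

theorem measurableSet_window_eqOn_futureSigma [MeasurableSingletonClass A] {i j : ℤ}
    {p : Fin k → Prop} (h : ∀ m : Fin k, p m → j ≤ i + m) (x : Fin k → A) :
    MeasurableSet[futureSigma X j] {ω | ∀ m, p m → window X k i ω m = x m} := by
  simp only [Set.ofPred_forall]
  exact .iInter fun m => .iInter fun hm =>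
    measurable_futureSigma (h m hm) (measurableSet_singleton _)

theorem measurableSet_window_eq_futureSigma [MeasurableSingletonClass A] {i j : ℤ} (h : j ≤ i)
    (x : Fin k → A) : MeasurableSet[futureSigma X j] {ω | window X k i ω = x} := by
  simpa [funext_iff] using
    measurableSet_window_eqOn_futureSigma (X := X) (p := fun _ => True) (fun m _ => by omega) x

theorem measurableSet_cyl [MeasurableSpace Ω] [MeasurableSingletonClass A]
    (hX : ∀ i, Measurable (X i)) (x : Fin k → A) : MeasurableSet (cyl X k x) := by
  rw [show cyl X k x = {ω | window X k 1 ω = x} from Set.ext fun _ => mem_cyl_iff]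
  exact futureSigma_le hX 1 _ (measurableSet_window_eq_futureSigma le_rfl x)

end Measurability

section Probabilities

variable {Ω A : Type*} [MeasurableSpace Ω] {μ : Measure Ω} {X : ℤ → Ω → A} {k : ℕ}

theorem blockProb_eq (ω : Ω) : blockProb μ X k ω = μ.real (cyl X k (window X k 1 ω)) := by
  rw [blockProb, measureReal_def]
  congr 2
  ext ω'
  rw [mem_cyl_iff, window_eq_window_iff]
  rfl

variable [MeasurableSpace A]

noncomputable def condCylProb (μ : Measure Ω) (X : ℤ → Ω → A) (k : ℕ) (x : Fin k → A) :
    Ω → ℝ :=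
  μ[(cyl X k x).indicator fun _ => (1 : ℝ) | futureSigma X (k + 1)]

theorem condBlockProb_eq [Fintype A] (ω : Ω) :
    condBlockProb μ X k (k + 1) ω = condCylProb μ X k (window X k 1 ω) ω := by
  rw [condBlockProb, tsum_fintype]
  change ∑ x, (cyl X k x).indicator (fun _ => (1 : ℝ)) ω * condCylProb μ X k x ω = _
  rw [Finset.sum_eq_single (window X k 1 ω)]
  · rw [Set.indicator_of_mem (mem_cyl_iff.2 rfl : ω ∈ cyl X k _), one_mul]
  · intro x _ hx
    rw [Set.indicator_of_notMem (fun h => hx (mem_cyl_iff.1 h).symm : ω ∉ cyl X k x), zero_mul]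
  · simp

theorem measurableSet_condCylProb_le (x : Fin k → A) (c : ℝ) :
    MeasurableSet[futureSigma X (k + 1)] {ω | condCylProb μ X k x ω ≤ c} :=
  (stronglyMeasurable_condExp.measurable : Measurable[futureSigma X (k + 1)]
    (condCylProb μ X k x)) measurableSet_Iic

end Probabilities

section UpperBound

variable {Ω A : Type*} [MeasurableSpace Ω] [MeasurableSpace A] [MeasurableSingletonClass A]
  [Fintype A] {μ : Measure Ω} [IsProbabilityMeasure μ] {X : ℤ → Ω → A}

def lateRecurrenceSet (μ : Measure Ω) (X : ℤ → Ω → A) (k : ℕ) (ρ : ℝ) : Set Ω :=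
  {ω | ∀ i : ℕ, 1 ≤ i → (i : ℝ) < (blockProb μ X k ω * ρ)⁻¹ →
    window X k (i + 1) ω ≠ window X k 1 ω}

theorem measure_lateRecurrenceSet_le (hX : ∀ i, Measurable (X i)) {T : Ω → Ω}
    (hT : MeasurePreserving T μ μ) (hshift : ∀ i ω, X i (T ω) = X (i + 1) ω) (k : ℕ)
    {ρ : ℝ} (hρ : 0 < ρ) : μ (lateRecurrenceSet μ X k ρ) ≤ ENNReal.ofReal ρ := by
  have hsub : lateRecurrenceSet μ X k ρ ⊆ ⋃ x, cyl X k x ∩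
      {ω | ∀ i, 1 ≤ i → i < ⌈(μ.real (cyl X k x) * ρ)⁻¹⌉₊ → T^[i] ω ∉ cyl X k x} := by
    intro ω hω
    refine Set.mem_iUnion.2 ⟨window X k 1 ω, mem_cyl_iff.2 rfl, fun i hi hlt hret => ?_⟩
    rw [Nat.lt_ceil, ← blockProb_eq] at hlt
    rw [mem_cyl_iff, window_iterate_of_shift hshift, add_comm] at hret
    exact hω i hi hlt hret
  calc μ (lateRecurrenceSet μ X k ρ)
      ≤ ∑ x, μ (cyl X k x ∩
          {ω | ∀ i, 1 ≤ i → i < ⌈(μ.real (cyl X k x) * ρ)⁻¹⌉₊ → T^[i] ω ∉ cyl X k x}) :=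
        (measure_mono hsub).trans (measure_iUnion_fintype_le _ _)
    _ ≤ ∑ x, ENNReal.ofReal ρ * μ (cyl X k x) := Finset.sum_le_sum fun x _ =>
        measure_inter_forall_iterate_notMem_le_ofReal hT (measurableSet_cyl hX x) hρ
    _ = ENNReal.ofReal ρ * μ (⋃ x, cyl X k x) := by
        rw [← Finset.mul_sum, measure_iUnion pairwise_disjoint_cyl (measurableSet_cyl hX),
          tsum_fintype]
    _ ≤ ENNReal.ofReal ρ := mul_le_of_le_one_right' prob_le_one

end UpperBound

section LowerBound

variable {Ω A : Type*} [MeasurableSpace Ω] [MeasurableSpace A] {μ : Measure Ω}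
  {X : ℤ → Ω → A} {k : ℕ}

def earlyRecurrenceSet (μ : Measure Ω) (X : ℤ → Ω → A) (k : ℕ) (ρ : ℝ) : Set Ω :=
  {ω | ∃ r : ℕ, recTime X k ω = r ∧ condCylProb μ X k (window X k 1 ω) ω ≤ ρ / (k * r)}

/-- On `{R_k = r}`, `r < k`, the block `X_1^k = X_{r+1}^{r+k}` is `r`-periodic; the part of
`X_{r+1}^{r+k}` beyond position `k` lies in the future and determines a periodic block. -/
def periodicSet (μ : Measure Ω) (X : ℤ → Ω → A) (k r : ℕ) (c : ℝ) : Set Ω :=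
  ⋃ x, cyl X k x ∩ {ω | BlockPeriodic r x ∧
    (∀ m : Fin k, k ≤ r + m → window X k (r + 1) ω m = x m) ∧ condCylProb μ X k x ω ≤ c}

def firstOccurrenceAt (μ : Measure Ω) (X : ℤ → Ω → A) (k : ℕ) (ρ : ℝ) (r : ℕ) (x : Fin k → A) :
    Set Ω :=
  {ω | k ≤ r ∧ window X k (r + 1) ω = x ∧ (∀ j, k ≤ j → j < r → window X k (j + 1) ω ≠ x) ∧
    condCylProb μ X k x ω ≤ ρ / (k * r)}

/-- For `r ≥ k` the event `R_k = r` forces `X_1^k = X_{r+1}^{r+k}`, a block of the future that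
occurs there for the first time after position `k`. -/
def firstOccurrenceSet (μ : Measure Ω) (X : ℤ → Ω → A) (k : ℕ) (ρ : ℝ) : Set Ω :=
  ⋃ r, ⋃ x, cyl X k x ∩ firstOccurrenceAt μ X k ρ r x

theorem earlyRecurrenceSet_subset (hk : 1 ≤ k) (ρ : ℝ) :
    earlyRecurrenceSet μ X k ρ ⊆
      (⋃ r ∈ Finset.Ico 1 k, periodicSet μ X k r (ρ / (k * r))) ∪ firstOccurrenceSet μ X k ρ := by
  rintro ω ⟨r, hr, hQ⟩
  obtain ⟨hr1, hmatch, hmin⟩ := recTime_eq_coe hr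
  have hcyl : ω ∈ cyl X k (window X k 1 ω) := mem_cyl_iff.2 rfl
  by_cases hrk : r < k
  · refine Or.inl (Set.mem_biUnion (Finset.mem_Ico.2 ⟨hr1, hrk⟩) (Set.mem_iUnion.2
      ⟨window X k 1 ω, hcyl, blockPeriodic_window hmatch, fun m _ => by rw [hmatch], hQ⟩))
  · refine Or.inr (Set.mem_iUnion.2 ⟨r, Set.mem_iUnion.2 ⟨window X k 1 ω, hcyl,
      by omega, hmatch, fun j hkj hjr hj => ?_, hQ⟩⟩)
    exact absurd (hmin j (by omega) hj) (by omega)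

theorem sum_indicator_firstOccurrenceAt_le [Fintype A] {ρ : ℝ} (hρ : 0 ≤ ρ) (r : ℕ) (ω : Ω) :
    ∑ x, (firstOccurrenceAt μ X k ρ r x).indicator
        (fun ω => ENNReal.ofReal (condCylProb μ X k x ω)) ω
      ≤ ENNReal.ofReal (ρ / k) *
        {r | IsFirstOccurrence X k r ω}.indicator (fun r => ENNReal.ofReal (r : ℝ)⁻¹) r := by
  rw [Finset.sum_eq_single (window X k (r + 1) ω)
    (fun x _ hx => Set.indicator_of_notMem (fun h => hx h.2.1.symm) _) (by simp)]
  by_cases hω : ω ∈ firstOccurrenceAt μ X k ρ r (window X k (r + 1) ω)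
  · have hfirst : IsFirstOccurrence X k r ω := ⟨hω.1, hω.2.2.1⟩
    rw [Set.indicator_of_mem hω,
      Set.indicator_of_mem (show r ∈ {r | IsFirstOccurrence X k r ω} from hfirst),
      ← ENNReal.ofReal_mul (by positivity)]
    exact ENNReal.ofReal_le_ofReal (hω.2.2.2.trans_eq (by ring))
  · rw [Set.indicator_of_notMem hω]
    exact zero_le

theorem measurableSet_firstOccurrenceAt [MeasurableSingletonClass A] (ρ : ℝ) (r : ℕ)
    (x : Fin k → A) :
    MeasurableSet[futureSigma X (k + 1)] (firstOccurrenceAt μ X k ρ r x) := by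
  by_cases hkr : k ≤ r
  · simp only [firstOccurrenceAt, hkr, true_and, Set.ofPred_and, Set.ofPred_forall]
    exact (measurableSet_window_eq_futureSigma (by omega) x).inter
      ((MeasurableSet.iInter fun j => .iInter fun hj => .iInter fun _ =>
        (measurableSet_window_eq_futureSigma (by omega) x).compl).inter
        (measurableSet_condCylProb_le x _))
  · simp [firstOccurrenceAt, hkr]

variable [MeasurableSingletonClass A] [Fintype A] [IsProbabilityMeasure μ]

theorem measure_periodicSet_le (hX : ∀ i, Measurable (X i)) {r : ℕ} (hr : 0 < r) (c : ℝ) :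
    μ (periodicSet μ X k r c) ≤ ENNReal.ofReal c := by
  refine measure_iUnion_inter_le_of_condExp_le (futureSigma_le hX _) (measurableSet_cyl hX)
    (fun x => ?_) (fun x y hxy => Set.disjoint_left.2 fun ω hx hy => hxy ?_) fun x ω hω => hω.2.2
  · simp only [Set.ofPred_and]
    refine (MeasurableSet.const _).inter ((measurableSet_window_eqOn_futureSigma
      (fun m hm => by omega) x).inter (measurableSet_condCylProb_le x c))
  · exact hx.1.eq_of_eqOn_tail hr hy.1 fun m hm => (hx.2.1 m hm).symm.trans (hy.2.1 m hm)

theorem measure_firstOccurrenceSet_le (hX : ∀ i, Measurable (X i)) (hk : 1 ≤ k) {ρ : ℝ}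
    (hρ : 0 ≤ ρ) : μ (firstOccurrenceSet μ X k ρ)
      ≤ ENNReal.ofReal (ρ / k) * ENNReal.ofReal (1 + Real.log (Fintype.card (Fin k → A))) := by
  have hF := futureSigma_le hX ((k : ℤ) + 1)
  set f : ℕ → (Fin k → A) → Ω → ℝ≥0∞ := fun r x => (firstOccurrenceAt μ X k ρ r x).indicator
    fun ω => ENNReal.ofReal (condCylProb μ X k x ω)
  have hf : ∀ r x, Measurable (f r x) := fun r x =>
    (stronglyMeasurable_condExp.mono hF).measurable.ennreal_ofReal.indicator
      (hF _ (measurableSet_firstOccurrenceAt ρ r x))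
  calc μ (firstOccurrenceSet μ X k ρ)
      ≤ ∑' r, ∑ x, μ (cyl X k x ∩ firstOccurrenceAt μ X k ρ r x) :=
        (measure_iUnion_le _).trans (ENNReal.tsum_le_tsum fun r => measure_iUnion_fintype_le _ _)
    _ = ∫⁻ ω, ∑' r, ∑ x, f r x ω ∂μ := by
        rw [lintegral_tsum fun r => (Finset.measurable_sum _ fun x _ => hf r x).aemeasurable]
        refine tsum_congr fun r => ?_
        rw [lintegral_finsetSum _ fun x _ => hf r x]
        refine Finset.sum_congr rfl fun x _ => ?_
        rw [measure_inter_eq_setLIntegral_condExp hF (measurableSet_cyl hX x)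
          (measurableSet_firstOccurrenceAt ρ r x),
          lintegral_indicator (hF _ (measurableSet_firstOccurrenceAt ρ r x))]
        rfl
    _ ≤ ∫⁻ _, ENNReal.ofReal (ρ / k) * ENNReal.ofReal (1 + Real.log (Fintype.card (Fin k → A)))
          ∂μ := by
        refine lintegral_mono fun ω => ?_
        refine (ENNReal.tsum_le_tsum fun r => sum_indicator_firstOccurrenceAt_le hρ r ω).trans ?_
        rw [ENNReal.tsum_mul_left]
        gcongr
        exact tsum_indicator_inv_le (injOn_window_isFirstOccurrence ω) fun h => by
          have := h.1; omega
    _ = _ := by rw [lintegral_const, measure_univ, mul_one]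

theorem measure_earlyRecurrenceSet_le (hX : ∀ i, Measurable (X i)) (hk : 1 ≤ k) {ρ : ℝ}
    (hρ : 0 ≤ ρ) :
    μ (earlyRecurrenceSet μ X k ρ) ≤ ENNReal.ofReal (ρ * (2 + Real.log (Fintype.card A))) := by
  have hkR : (1 : ℝ) ≤ k := by exact_mod_cast hk
  have hlogD : 0 ≤ Real.log (Fintype.card A) := Real.log_natCast_nonneg _
  have hperiodic : ∑ r ∈ Finset.Ico 1 k, ρ / (k * r) ≤ ρ := by
    calc ∑ r ∈ Finset.Ico 1 k, ρ / (k * r) ≤ ∑ r ∈ Finset.Ico 1 k, ρ / k :=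
          Finset.sum_le_sum fun r hr => div_le_div_of_nonneg_left hρ (by positivity)
            (le_mul_of_one_le_right (by positivity)
              (by exact_mod_cast (Finset.mem_Ico.1 hr).1))
      _ ≤ ρ := by
          rw [Finset.sum_const, Nat.card_Ico, nsmul_eq_mul, Nat.cast_sub hk, Nat.cast_one]
          rw [mul_div_assoc', div_le_iff₀ (by positivity)]
          nlinarith
  have hlog : Real.log (Fintype.card (Fin k → A)) = k * Real.log (Fintype.card A) := by
    rw [Fintype.card_fun, Fintype.card_fin, Nat.cast_pow, Real.log_pow]
  have hfirst :
      ρ / k * (1 + k * Real.log (Fintype.card A)) ≤ ρ * (1 + Real.log (Fintype.card A)) := by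
    rw [mul_add, mul_one, ← mul_assoc, div_mul_cancel₀ _ (by positivity), mul_add, mul_one]
    gcongr
    exact div_le_self hρ hkR
  calc μ (earlyRecurrenceSet μ X k ρ)
      ≤ ∑ r ∈ Finset.Ico 1 k, μ (periodicSet μ X k r (ρ / (k * r))) +
          μ (firstOccurrenceSet μ X k ρ) :=
        (measure_mono (earlyRecurrenceSet_subset hk ρ)).trans
          ((measure_union_le _ _).trans (add_le_add_left (measure_biUnion_finset_le _ _) _))
    _ ≤ ∑ r ∈ Finset.Ico 1 k, ENNReal.ofReal (ρ / (k * r)) +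
          ENNReal.ofReal (ρ / k) * ENNReal.ofReal (1 + Real.log (Fintype.card (Fin k → A))) :=
        add_le_add (Finset.sum_le_sum fun r hr => measure_periodicSet_le hX
          (Finset.mem_Ico.1 hr).1 _) (measure_firstOccurrenceSet_le hX hk hρ)
    _ ≤ ENNReal.ofReal (ρ * (2 + Real.log (Fintype.card A))) := by
        rw [← ENNReal.ofReal_sum_of_nonneg fun _ _ => by positivity,
          ← ENNReal.ofReal_mul (by positivity), ← ENNReal.ofReal_add (by positivity)
            (by positivity), hlog]
        exact ENNReal.ofReal_le_ofReal (by linarith)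

end LowerBound

theorem recurrence_bounds_of_notMem {Ω A : Type*} [MeasurableSpace Ω] [MeasurableSpace A]
    [Fintype A] {μ : Measure Ω} {X : ℤ → Ω → A} {k : ℕ} {ρ : ℝ} {ω : Ω} (hk : 1 ≤ k)
    (hρ : 0 < ρ) (hlate : ω ∉ lateRecurrenceSet μ X k ρ)
    (hearly : ω ∉ earlyRecurrenceSet μ X k ρ) :
    recTime X k ω ≠ ⊤ ∧
      -Real.log (condBlockProb μ X k ((k : ℤ) + 1) ω) + Real.log ρ - Real.log k
        < Real.log ((recTime X k ω).toNat) ∧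
      Real.log ((recTime X k ω).toNat) < -Real.log (blockProb μ X k ω) - Real.log ρ := by
  simp only [lateRecurrenceSet, Set.mem_ofPred_eq, not_forall, not_not, exists_prop] at hlate
  obtain ⟨i, hi, hlt, hmatch⟩ := hlate
  have hRi := recTime_le hi hmatch
  obtain ⟨r, hr⟩ := ENat.ne_top_iff_exists.1 (ne_top_of_le_ne_top (ENat.natCast_ne_top i) hRi)
  have hr1 := (recTime_eq_coe hr.symm).1
  have hrR : (0 : ℝ) < r := by exact_mod_cast hr1
  have hri : (r : ℝ) ≤ i := by exact_mod_cast (hr ▸ hRi : (r : ℕ∞) ≤ i)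
  rw [← hr, ENat.toNat_natCast, condBlockProb_eq]
  refine ⟨ENat.natCast_ne_top r, ?_, ?_⟩
  · have hQ : ρ / (k * r) < condCylProb μ X k (window X k 1 ω) ω :=
      not_le.1 fun h => hearly ⟨r, hr.symm, h⟩
    have hk0 : (0 : ℝ) < k := by exact_mod_cast hk
    have := Real.log_lt_log (by positivity) hQ
    rw [Real.log_div hρ.ne' (by positivity), Real.log_mul hk0.ne' hrR.ne'] at this
    linarith
  · have hpρ : 0 < blockProb μ X k ω * ρ := inv_pos.1 (hrR.trans_le hri |>.trans hlt)
    have hp : 0 < blockProb μ X k ω := (pos_iff_pos_of_mul_pos hpρ).2 hρ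
    have := Real.log_lt_log hrR (hri.trans_lt hlt)
    rw [Real.log_inv, Real.log_mul hp.ne' hρ.ne'] at this
    linarith

end Recurrence

open Recurrence

/-- **Proposition 1.** For a stationary ergodic process over a `D`-ary alphabet and
summable positive `(ρ_k)`, almost surely for all sufficiently large `k`,
`-log P(X₁^k|X_{k+1}^∞) + log ρ_k - log k < log R⁽¹⁾_k < -log P(X₁^k) - log ρ_k`. -/
theorem sandwich_recurrence {Ω A : Type*} [MeasurableSpace Ω] [MeasurableSpace A]
    [MeasurableSingletonClass A] [Fintype A]
    (μ : Measure Ω) [IsProbabilityMeasure μ] (X : ℤ → Ω → A) (hXmeas : ∀ i, Measurable (X i))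
    (T : Ω → Ω) (hT : Ergodic T μ) (hshift : ∀ i ω, X i (T ω) = X (i + 1) ω)
    (ρ : ℕ → ℝ) (hρpos : ∀ k, 0 < ρ k) (hρ : Summable ρ) :
    ∀ᵐ ω ∂μ, ∀ᶠ k : ℕ in atTop,
      recTime X k ω ≠ ⊤ ∧
      -Real.log (condBlockProb μ X k ((k : ℤ) + 1) ω) + Real.log (ρ k) - Real.log k
        < Real.log ((recTime X k ω).toNat) ∧
      Real.log ((recTime X k ω).toNat)
        < -Real.log (blockProb μ X k ω) - Real.log (ρ k) := by
  set bad : ℕ → Set Ω := fun k =>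
    lateRecurrenceSet μ X (k + 1) (ρ (k + 1)) ∪ earlyRecurrenceSet μ X (k + 1) (ρ (k + 1))
  have hlogD : 0 ≤ Real.log (Fintype.card A) := Real.log_natCast_nonneg _
  set C := 3 + Real.log (Fintype.card A)
  have hbad : ∀ k, μ (bad k) ≤ ENNReal.ofReal (ρ (k + 1) * C) := fun k =>
    (measure_union_le _ _).trans <| (add_le_add
      (measure_lateRecurrenceSet_le hXmeas hT.toMeasurePreserving hshift _ (hρpos _))
      (measure_earlyRecurrenceSet_le hXmeas k.succ_pos (hρpos _).le)).trans <| by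
        rw [← ENNReal.ofReal_add (hρpos _).le (mul_nonneg (hρpos _).le (by linarith))]
        exact ENNReal.ofReal_le_ofReal (by linarith)
  have hsum : ∑' k, μ (bad k) ≠ ∞ := by
    refine ne_top_of_le_ne_top ?_ (ENNReal.tsum_le_tsum hbad)
    rw [← ENNReal.ofReal_tsum_of_nonneg (fun k => mul_nonneg (hρpos _).le (by linarith))
      (((summable_nat_add_iff 1).2 hρ).mul_right C)]
    exact ENNReal.ofReal_ne_top
  filter_upwards [ae_eventually_notMem hsum] with ω hω
  rw [← map_add_atTop_eq_nat 1, eventually_map]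
  filter_upwards [hω] with k hk
  rw [Set.mem_union, not_or] at hk
  exact recurrence_bounds_of_notMem k.succ_pos (hρpos _) hk.1 hk.2
end

section
/- Let (X_i)_{i∈ℤ} be a stationary process over a countable alphabet. Then for all k ≥ 1 and all integers 0 ≤ i < j, P(X_{i+1}^{i+k} = X_{j+1}^{j+k}) ≤ e^{-H_∞(X₁^k | X_{k+1}^{k+j-i})}. -/
open MeasureTheory ProbabilityTheory Filter Set
open scoped ENNReal NNReal

/-! On the event `X_1^k = X_{D+1}^{D+k}` the path `X_1, …, X_{k+D}` is `D`-periodic, so the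
block `X_1^k` is a function of the following window `X_{k+1}^{k+D}`. Hence the event, split
according to the value `y` of that window, has probability at most
`∑_y max_x P(X_1^k = x, X_{k+1}^{k+D} = y) = e^{-H_∞(X_1^k | X_{k+1}^{k+D})}`; stationarity moves
the pair of blocks at `i` and `j` to the pair at `0` and `D = j - i`. -/

theorem Int.apply_eq_of_modEq_of_apply_add_eq {α : Type*} {f : ℤ → α} {d lo hi : ℤ}
    (hd : 0 < d) (hf : ∀ t, lo ≤ t → t < hi → f t = f (t + d)) {s t : ℤ}
    (hs : lo ≤ s) (hs' : s < hi + d) (ht : lo ≤ t) (ht' : t < hi + d) (hst : s ≡ t [ZMOD d]) :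
    f s = f t := by
  have step : ∀ n : ℕ, ∀ s, lo ≤ s → s + n * d < hi + d → f s = f (s + n * d) := by
    intro n
    induction n with
    | zero => simp
    | succ n ih =>
      intro s hs hlt
      have hnd : 0 ≤ (n : ℤ) * d := by positivity
      push_cast at hlt
      rw [hf s hs (by linarith), ih (s + d) (by linarith) (by linarith)]
      push_cast
      ring_nf
  wlog hle : s ≤ t generalizing s t
  · exact (this ht ht' hs hs' hst.symm (by linarith)).symm
  obtain ⟨c, hc⟩ := hst.dvd
  lift c to ℕ using by nlinarith
  have hts : t = s + c * d := by linarith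
  exact hts ▸ step c s hs (hts ▸ ht')

section Blocks

variable {Ω A : Type*} {X : ℤ → Ω → A}

def blockSet (X : ℤ → Ω → A) (a : ℤ) {n : ℕ} (x : Fin n → A) : Set Ω :=
  {ω | ∀ m : Fin n, X (a + m) ω = x m}

def matchSet (X : ℤ → Ω → A) (k : ℕ) (a b : ℤ) : Set Ω :=
  {ω | ∀ m : ℕ, m < k → X (a + 1 + m) ω = X (b + 1 + m) ω}

lemma iUnion_blockSet (a : ℤ) (n : ℕ) : ⋃ x : Fin n → A, blockSet X a x = univ :=
  eq_univ_of_forall fun ω => mem_iUnion.2 ⟨fun m => X (a + m) ω, fun _ => rfl⟩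

lemma pairwise_disjoint_blockSet (a : ℤ) (n : ℕ) :
    Pairwise (Function.onFun Disjoint fun x : Fin n → A => blockSet X a x) :=
  fun _ _ hne => disjoint_left.2 fun _ hx hy =>
    hne (funext fun m => (hx m).symm.trans (hy m))

lemma exists_inter_blockSet_subset_blockSet {k D : ℕ} (hD : 0 < D) :
    ∃ g : (Fin D → A) → Fin k → A, ∀ y,
      matchSet X k 0 D ∩ blockSet X (k + 1) y ⊆ blockSet X 1 (g y) := by
  have hD' : (0 : ℤ) < D := by exact_mod_cast hD
  -- `X_{1+m}` is read off at the position `k + 1 + r` of the window with `r ≡ m - k [ZMOD D]`.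
  have hr : ∀ m : Fin k, (((m : ℤ) - k) % D).toNat < D := fun m => by
    have := Int.emod_lt_of_pos ((m : ℤ) - k) hD'
    omega
  refine ⟨fun y m => y ⟨_, hr m⟩, fun y ω ⟨hmatch, hy⟩ m => ?_⟩
  show X (1 + m) ω = y ⟨_, hr m⟩
  rw [← hy ⟨_, hr m⟩]
  have hperiodic : ∀ t : ℤ, 1 ≤ t → t < k + 1 → X t ω = X (t + D) ω := fun t h1 h2 => by
    have := hmatch (t - 1).toNat (by omega)
    rwa [show (0 : ℤ) + 1 + (t - 1).toNat = t by omega,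
      show (D : ℤ) + 1 + (t - 1).toNat = t + D by omega] at this
  have hmod := Int.emod_nonneg ((m : ℤ) - k) hD'.ne'
  apply Int.apply_eq_of_modEq_of_apply_add_eq hD' hperiodic
    (by omega) (by omega) (by omega) (by omega)
  rw [Int.toNat_of_nonneg hmod]
  calc (1 + m : ℤ) = k + 1 + (m - k) := by ring
    _ ≡ k + 1 + (m - k) % D [ZMOD D] := ((Int.mod_modEq _ _).add_left _).symm

lemma iterate_shift {T : Ω → Ω} (hshift : ∀ i ω, X i (T ω) = X (i + 1) ω) (n : ℕ) (a : ℤ)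
    (ω : Ω) : X a (T^[n] ω) = X (a + n) ω := by
  induction n generalizing a with
  | zero => simp
  | succ n ih => rw [Function.iterate_succ_apply', hshift, ih]; push_cast; ring_nf

lemma preimage_iterate_matchSet {T : Ω → Ω} (hshift : ∀ i ω, X i (T ω) = X (i + 1) ω)
    (n k : ℕ) (a b : ℤ) : T^[n] ⁻¹' matchSet X k a b = matchSet X k (a + n) (b + n) := by
  ext ω
  simp only [matchSet, mem_preimage, mem_ofPred_eq, iterate_shift hshift]
  refine forall₂_congr fun m _ => ?_
  ring_nf

variable [MeasurableSpace Ω] {μ : Measure Ω}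

noncomputable def guessProb (μ : Measure Ω) (X : ℤ → Ω → A) (k n : ℕ) : ℝ≥0∞ :=
  ∑' y : Fin n → A, ⨆ x : Fin k → A, μ (blockSet X 1 x ∩ blockSet X (k + 1) y)

lemma condMinEntropy_eq_neg_log_guessProb [IsFiniteMeasure μ] (k n : ℕ) :
    condMinEntropy μ X k n = -Real.log (guessProb μ X k n).toReal := by
  have hfin : ∀ y : Fin n → A, ⨆ x : Fin k → A, μ (blockSet X 1 x ∩ blockSet X (k + 1) y) ≠ ∞ :=
    fun y => ne_top_of_le_ne_top (measure_ne_top μ univ)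
      (iSup_le fun _ => measure_mono (subset_univ _))
  rw [guessProb, ENNReal.tsum_toReal_eq hfin]
  simp only [ENNReal.toReal_iSup fun _ => measure_ne_top μ _]
  rfl

variable [MeasurableSpace A]

lemma measurableSet_blockSet [MeasurableSingletonClass A] (hX : ∀ i, Measurable (X i))
    (a : ℤ) {n : ℕ} (x : Fin n → A) : MeasurableSet (blockSet X a x) := by
  simp only [blockSet, ofPred_forall]
  exact .iInter fun m => hX _ (measurableSet_singleton _)

lemma measurableSet_matchSet [MeasurableEq A] (hX : ∀ i, Measurable (X i)) (k : ℕ) (a b : ℤ) :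
    MeasurableSet (matchSet X k a b) := by
  simp only [matchSet, ofPred_forall]
  exact .iInter fun m => .iInter fun _ => measurableSet_eq_fun (hX _) (hX _)

lemma measure_matchSet_add [MeasurableEq A] (hX : ∀ i, Measurable (X i)) {T : Ω → Ω}
    (hT : MeasurePreserving T μ μ) (hshift : ∀ i ω, X i (T ω) = X (i + 1) ω)
    (n k : ℕ) (a b : ℤ) : μ (matchSet X k (a + n) (b + n)) = μ (matchSet X k a b) := by
  rw [← preimage_iterate_matchSet hshift]
  exact (hT.iterate n).measure_preimage (measurableSet_matchSet hX k a b).nullMeasurableSet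

variable [MeasurableSingletonClass A] [Countable A]

lemma tsum_measure_inter_blockSet (hX : ∀ i, Measurable (X i)) {S : Set Ω}
    (hS : MeasurableSet S) (a : ℤ) (n : ℕ) :
    ∑' y : Fin n → A, μ (S ∩ blockSet X a y) = μ S := by
  rw [← measure_iUnion, ← inter_iUnion, iUnion_blockSet, inter_univ]
  · exact fun y y' hne => (pairwise_disjoint_blockSet a n hne).mono
      inter_subset_right inter_subset_right
  · exact fun y => hS.inter (measurableSet_blockSet hX a y)

lemma guessProb_le_measure_univ (hX : ∀ i, Measurable (X i)) (k n : ℕ) :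
    guessProb μ X k n ≤ μ univ :=
  calc guessProb μ X k n ≤ ∑' y : Fin n → A, μ (univ ∩ blockSet X (k + 1) y) :=
        ENNReal.tsum_le_tsum fun _ => iSup_le fun _ =>
          measure_mono (inter_subset_right.trans (subset_inter (subset_univ _) subset_rfl))
    _ = μ univ := tsum_measure_inter_blockSet hX .univ _ _

lemma measure_matchSet_le_guessProb (hX : ∀ i, Measurable (X i)) {k D : ℕ} (hD : 0 < D) :
    μ (matchSet X k 0 D) ≤ guessProb μ X k D := by
  obtain ⟨g, hg⟩ := exists_inter_blockSet_subset_blockSet (X := X) (k := k) hD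
  calc μ (matchSet X k 0 D)
      = ∑' y, μ (matchSet X k 0 D ∩ blockSet X (k + 1) y) :=
        (tsum_measure_inter_blockSet hX (measurableSet_matchSet hX k 0 D) _ _).symm
    _ ≤ guessProb μ X k D := ENNReal.tsum_le_tsum fun y =>
        le_iSup_of_le (g y) (measure_mono (subset_inter (hg y) inter_subset_right))

end Blocks

lemma ENNReal.le_ofReal_exp_log_toReal {m s : ℝ≥0∞} (hs : s ≠ ∞) (h : m ≤ s) :
    m ≤ ENNReal.ofReal (Real.exp (Real.log s.toReal)) := by
  rcases eq_or_ne s 0 with rfl | hs0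
  · simp_all
  · rwa [Real.exp_log (ENNReal.toReal_pos hs0 hs), ENNReal.ofReal_toReal hs]

theorem block_collision_bound_general {Ω A : Type*} [MeasurableSpace Ω] [MeasurableSpace A]
    [MeasurableSingletonClass A] [Countable A]
    (μ : Measure Ω) [IsProbabilityMeasure μ] (X : ℤ → Ω → A) (hXmeas : ∀ i, Measurable (X i))
    (T : Ω → Ω) (hT : MeasurePreserving T μ μ) (hshift : ∀ i ω, X i (T ω) = X (i + 1) ω)
    (k : ℕ) (i j : ℕ) (hij : i < j) :
    μ {ω | ∀ m : ℕ, m < k → X ((i : ℤ) + 1 + (m : ℤ)) ω = X ((j : ℤ) + 1 + (m : ℤ)) ω}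
      ≤ ENNReal.ofReal (Real.exp (-condMinEntropy μ X k (j - i))) := by
  have hshifted : matchSet X k i j = matchSet X k (0 + i : ℕ) ((j - i : ℕ) + i : ℕ) := by
    rw [zero_add, Nat.sub_add_cancel hij.le]
  rw [condMinEntropy_eq_neg_log_guessProb, neg_neg]
  calc μ (matchSet X k i j) = μ (matchSet X k 0 (j - i : ℕ)) := by
        rw [hshifted, Nat.cast_add, Nat.cast_add, Nat.cast_zero,
          measure_matchSet_add hXmeas hT hshift]
    _ ≤ _ := ENNReal.le_ofReal_exp_log_toReal
        ((guessProb_le_measure_univ hXmeas k _).trans_lt (measure_lt_top μ _)).ne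
        (measure_matchSet_le_guessProb hXmeas (Nat.sub_pos_of_lt hij))

/-- For a stationary process over a countable alphabet, for all `k ≥ 1` and `0 ≤ i < j`,
`P(X_{i+1}^{i+k} = X_{j+1}^{j+k}) ≤ e^{-H_∞(X₁^k | X_{k+1}^{k+j-i})}`. -/
theorem block_collision_bound {Ω A : Type*} [MeasurableSpace Ω] [MeasurableSpace A]
    [MeasurableSingletonClass A] [Countable A]
    (μ : Measure Ω) [IsProbabilityMeasure μ] (X : ℤ → Ω → A) (hXmeas : ∀ i, Measurable (X i))
    (T : Ω → Ω) (hT : MeasurePreserving T μ μ) (hshift : ∀ i ω, X i (T ω) = X (i + 1) ω)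
    (k : ℕ) (hk : 1 ≤ k) (i j : ℕ) (hij : i < j) :
    μ {ω | ∀ m : ℕ, m < k → X ((i : ℤ) + 1 + (m : ℤ)) ω = X ((j : ℤ) + 1 + (m : ℤ)) ω}
      ≤ ENNReal.ofReal (Real.exp (-condMinEntropy μ X k (j - i))) :=
  block_collision_bound_general μ X hXmeas T hT hshift k i j hij
end

section
/- Let (X_i)_{i∈ℤ} be a stationary process over a countable alphabet and let (ρ_k)_{k≥1} be positive numbers with ∑_{k=1}^∞ ρ_k < ∞. Then almost surely, for all sufficiently large k, log R^{(2)}_k > (1/3) H_•(X₁^k | X_{k+1}^∞) + (1/3) log ρ_k. -/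
open MeasureTheory ProbabilityTheory Filter Set
open scoped ENNReal NNReal

/-!
If `R⁽²⁾_k ≤ N`, some block `X_{i+1}^{i+k}` repeats `X_{j+1}^{j+k}` with `j < i ≤ N`; by
stationarity this is as likely as `X_1^k` repeating at distance `d = i - j`. Such a repetition
makes `X_1^{k+d}` `d`-periodic, so `X_1^k` is a function of `X_{k+1}^{k+d}`, and the repetition
has probability at most `exp (-H_∞(X_1^k | X_{k+1}^{k+d})) ≤ d (d + 1) exp (-H_•)`. Summing over
the `N²` pairs gives `P(R⁽²⁾_k ≤ N) ≤ N² (N + 1) exp (-H_•)`, which is `O(ρ_k)` at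
`N = exp (H_•/3) ρ_k^{1/3}`; Borel–Cantelli concludes.
-/

theorem Nat.exists_le_add_mul_lt_add {m k d : ℕ} (hd : 0 < d) (hm : m < k) :
    ∃ s, k ≤ m + d * s ∧ m + d * s < k + d := by
  refine ⟨(k - m - 1) / d + 1, ?_⟩
  have := Nat.div_add_mod (k - m - 1) d
  have := Nat.mod_lt (k - m - 1) hd
  rw [Nat.mul_succ]
  omega

theorem apply_add_mul_eq_of_apply_add_eq {α : Type*} {u : ℕ → α} {d n : ℕ}
    (h : ∀ c < n, u (c + d) = u c) (a : ℕ) : ∀ s, a + d * s < n + d → u (a + d * s) = u a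
  | 0, _ => rfl
  | s + 1, hs => by
    rw [Nat.mul_succ] at hs ⊢
    rw [← add_assoc, h _ (by omega)]
    exact apply_add_mul_eq_of_apply_add_eq h a s (by omega)

section Blocks

variable {Ω A : Type*}

def blockEvent (X : ℤ → Ω → A) (a : ℤ) {n : ℕ} (x : Fin n → A) : Set Ω :=
  {ω | ∀ m : Fin n, X (a + m) ω = x m}

def matchEvent (X : ℤ → Ω → A) (i j k : ℕ) : Set Ω :=
  {ω | ∀ m < k, X ((i : ℤ) + 1 + m) ω = X ((j : ℤ) + 1 + m) ω}

theorem exists_matchEvent_subset_iUnion_blockEvent (X : ℤ → Ω → A) {d : ℕ} (hd : 0 < d)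
    (k : ℕ) : ∃ f : (Fin d → A) → Fin k → A,
      matchEvent X d 0 k ⊆ ⋃ y, blockEvent X 1 (f y) ∩ blockEvent X (k + 1) y := by
  choose s hs using fun m : Fin k => Nat.exists_le_add_mul_lt_add hd m.isLt
  refine ⟨fun y m => y ⟨m + d * s m - k, by have := hs m; omega⟩, fun ω hω => ?_⟩
  refine mem_iUnion.2 ⟨fun m => X (k + 1 + m) ω, fun m => ?_, fun m => rfl⟩
  have hperiodic := apply_add_mul_eq_of_apply_add_eq (u := fun c : ℕ => X (1 + c) ω) (n := k)
    (fun c hc => by convert hω c hc using 2 <;> push_cast <;> ring) m (s m) (hs m).2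
  rw [← hperiodic]
  congr 1
  push_cast [Nat.cast_sub (hs m).1]
  ring

theorem pairwise_disjoint_blockEvent (X : ℤ → Ω → A) (a : ℤ) (n : ℕ) :
    Pairwise (Function.onFun Disjoint fun x : Fin n → A => blockEvent X a x) :=
  fun _ _ hne => disjoint_left.2 fun _ hx hy => hne (funext fun m => (hx m).symm.trans (hy m))

theorem iUnion_blockEvent (X : ℤ → Ω → A) (a : ℤ) (n : ℕ) :
    ⋃ x : Fin n → A, blockEvent X a x = univ :=
  eq_univ_of_forall fun ω => mem_iUnion.2 ⟨fun m => X (a + m) ω, fun _ => rfl⟩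

variable [MeasurableSpace Ω] [MeasurableSpace A] [MeasurableSingletonClass A] {X : ℤ → Ω → A}

theorem measurableSet_blockEvent (hX : ∀ i, Measurable (X i)) (a : ℤ) {n : ℕ}
    (x : Fin n → A) : MeasurableSet (blockEvent X a x) := by
  simp only [blockEvent, ofPred_forall]
  exact .iInter fun m => hX _ (measurableSet_singleton _)

theorem measurableSet_matchEvent [Countable A] (hX : ∀ i, Measurable (X i)) (i j k : ℕ) :
    MeasurableSet (matchEvent X i j k) := by
  simp only [matchEvent, ofPred_forall]
  exact .iInter fun m => .iInter fun _ => measurableSet_eq_fun (hX _) (hX _)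

theorem tsum_measure_blockEvent [Countable A] (μ : Measure Ω) [IsProbabilityMeasure μ]
    (hX : ∀ i, Measurable (X i)) (a : ℤ) (n : ℕ) :
    ∑' x : Fin n → A, μ (blockEvent X a x) = 1 := by
  rw [← measure_iUnion (pairwise_disjoint_blockEvent X a n) (measurableSet_blockEvent hX a),
    iUnion_blockEvent, measure_univ]

end Blocks

section GuessProb

variable {Ω A : Type*} [MeasurableSpace Ω] (μ : Measure Ω) (X : ℤ → Ω → A)

/-- `E[max_x P(X₁^k = x | X_{k+1}^{k+i})]`, which is `exp (-condMinEntropy μ X k i)` unless it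
vanishes (then `condMinEntropy` is `-log 0 = 0`). -/
noncomputable def condGuessProb (k i : ℕ) : ℝ≥0∞ :=
  ∑' y : Fin i → A, ⨆ x : Fin k → A, μ (blockEvent X 1 x ∩ blockEvent X (k + 1) y)

theorem condMinEntropy_eq_neg_log_condGuessProb [IsFiniteMeasure μ] (k i : ℕ) :
    condMinEntropy μ X k i = -Real.log (condGuessProb μ X k i).toReal := by
  have hfin : ∀ y : Fin i → A, ⨆ x : Fin k → A,
      μ (blockEvent X 1 x ∩ blockEvent X (k + 1) y) ≠ ⊤ := fun y =>
    ne_top_of_le_ne_top (measure_ne_top μ univ) (iSup_le fun _ => measure_mono (subset_univ _))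
  rw [condGuessProb, ENNReal.tsum_toReal_eq hfin]
  simp only [ENNReal.toReal_iSup fun _ => measure_ne_top μ _]
  rfl

variable [Countable A]

theorem measure_matchEvent_le_condGuessProb {d : ℕ} (hd : 0 < d) (k : ℕ) :
    μ (matchEvent X d 0 k) ≤ condGuessProb μ X k d := by
  obtain ⟨f, hf⟩ := exists_matchEvent_subset_iUnion_blockEvent X hd k
  calc μ (matchEvent X d 0 k)
      ≤ ∑' y, μ (blockEvent X 1 (f y) ∩ blockEvent X (k + 1) y) :=
        (measure_mono hf).trans (measure_iUnion_le _)
    _ ≤ condGuessProb μ X k d :=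
        ENNReal.tsum_le_tsum fun y =>
          le_iSup (fun x => μ (blockEvent X 1 x ∩ blockEvent X (k + 1) y)) (f y)

variable [MeasurableSpace A] [MeasurableSingletonClass A] [IsProbabilityMeasure μ] {X}

theorem condGuessProb_le_one (hX : ∀ i, Measurable (X i)) (k i : ℕ) :
    condGuessProb μ X k i ≤ 1 :=
  calc condGuessProb μ X k i ≤ ∑' y : Fin i → A, μ (blockEvent X (k + 1) y) :=
        ENNReal.tsum_le_tsum fun _ => iSup_le fun _ => measure_mono inter_subset_right
    _ = 1 := tsum_measure_blockEvent μ hX _ i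

theorem exp_neg_condMinEntropy_le_one (hX : ∀ i, Measurable (X i)) (k i : ℕ) :
    Real.exp (-condMinEntropy μ X k i) ≤ 1 := by
  rw [condMinEntropy_eq_neg_log_condGuessProb, neg_neg]
  rcases ENNReal.toReal_nonneg.eq_or_lt with h0 | hpos
  · rw [← h0, Real.log_zero, Real.exp_zero]
  · rw [Real.exp_log hpos]
    exact ENNReal.toReal_le_of_le_ofReal zero_le_one
      (by simpa using condGuessProb_le_one μ hX k i)

theorem condGuessProb_le_ofReal_exp_neg_condMinEntropy (hX : ∀ i, Measurable (X i)) (k i : ℕ) :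
    condGuessProb μ X k i ≤ ENNReal.ofReal (Real.exp (-condMinEntropy μ X k i)) := by
  rw [condMinEntropy_eq_neg_log_condGuessProb, neg_neg]
  calc condGuessProb μ X k i = ENNReal.ofReal (condGuessProb μ X k i).toReal :=
        (ENNReal.ofReal_toReal (ne_top_of_le_ne_top ENNReal.one_ne_top
          (condGuessProb_le_one μ hX k i))).symm
    _ ≤ _ := ENNReal.ofReal_le_ofReal (Real.le_exp_log _)

end GuessProb

section Stationarity

variable {Ω A : Type*} {X : ℤ → Ω → A} {T : Ω → Ω}

theorem apply_iterate_of_shift (hshift : ∀ i ω, X i (T ω) = X (i + 1) ω) (j : ℕ) (i : ℤ)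
    (ω : Ω) : X i (T^[j] ω) = X (i + j) ω := by
  induction j generalizing i ω with
  | zero => simp
  | succ j ih =>
    rw [Function.iterate_succ_apply, ih, hshift]
    push_cast
    ring_nf

theorem preimage_iterate_matchEvent (hshift : ∀ i ω, X i (T ω) = X (i + 1) ω)
    (i i' j k : ℕ) : T^[j] ⁻¹' matchEvent X i i' k = matchEvent X (i + j) (i' + j) k := by
  ext ω
  simp only [mem_preimage, matchEvent, mem_ofPred_eq, apply_iterate_of_shift hshift]
  push_cast
  refine forall₂_congr fun m _ => ?_
  ring_nf

theorem setOf_repTime_le_subset (X : ℤ → Ω → A) (k N : ℕ) :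
    {ω | repTime X k ω ≤ N} ⊆
      ⋃ d ∈ Finset.range N, ⋃ j ∈ Finset.range N, matchEvent X (d + 1 + j) j k := by
  intro ω hω
  obtain ⟨_, ⟨i, rfl, -, j, hji, hmatch⟩, hiN⟩ :=
    sInf_lt_iff.1 ((Order.lt_add_one_iff_of_not_isMax (ENat.natCast_lt_top N).not_isMax).2 hω)
  have hiN : i < N + 1 := by exact_mod_cast hiN
  simp only [mem_iUnion, Finset.mem_range]
  refine ⟨i - j - 1, by omega, j, by omega, ?_⟩
  rwa [show i - j - 1 + 1 + j = i by omega]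

variable [MeasurableSpace Ω] [MeasurableSpace A] [MeasurableSingletonClass A] [Countable A]
  {μ : Measure Ω}

theorem measure_matchEvent_add (hX : ∀ i, Measurable (X i)) (hT : MeasurePreserving T μ μ)
    (hshift : ∀ i ω, X i (T ω) = X (i + 1) ω) (i i' j k : ℕ) :
    μ (matchEvent X (i + j) (i' + j) k) = μ (matchEvent X i i' k) := by
  rw [← preimage_iterate_matchEvent hshift,
    (hT.iterate j).measure_preimage (measurableSet_matchEvent hX i i' k).nullMeasurableSet]

theorem measure_repTime_le_le_sum_measure_matchEvent (hX : ∀ i, Measurable (X i))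
    (hT : MeasurePreserving T μ μ) (hshift : ∀ i ω, X i (T ω) = X (i + 1) ω) (k N : ℕ) :
    μ {ω | repTime X k ω ≤ N} ≤ N * ∑ d ∈ Finset.range N, μ (matchEvent X (d + 1) 0 k) :=
  calc μ {ω | repTime X k ω ≤ N}
      ≤ ∑ d ∈ Finset.range N, ∑ j ∈ Finset.range N, μ (matchEvent X (d + 1 + j) j k) :=
        (measure_mono (setOf_repTime_le_subset X k N)).trans <|
          (measure_biUnion_finset_le _ _).trans <|
            Finset.sum_le_sum fun _ _ => measure_biUnion_finset_le _ _
    _ = N * ∑ d ∈ Finset.range N, μ (matchEvent X (d + 1) 0 k) := by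
        have hstationary : ∀ d j,
            μ (matchEvent X (d + 1 + j) j k) = μ (matchEvent X (d + 1) 0 k) := fun d j => by
          rw [← measure_matchEvent_add hX hT hshift (d + 1) 0 j k, zero_add]
        simp only [hstationary, Finset.sum_const, Finset.card_range, nsmul_eq_mul,
          Finset.mul_sum]

end Stationarity

theorem summable_one_div_add_one_mul_add_two :
    Summable fun i : ℕ => 1 / (((i : ℝ) + 1) * ((i : ℝ) + 2)) := by
  have hsq : Summable fun i : ℕ => 1 / ((i : ℝ) + 1) ^ 2 := by
    simpa using (summable_nat_add_iff 1).2 (Real.summable_one_div_nat_pow.2 one_lt_two)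
  refine hsq.of_nonneg_of_le (fun i => by positivity) fun i => ?_
  gcongr
  nlinarith

theorem sum_range_le_mul_tsum_div {a : ℕ → ℝ} (ha : ∀ i, 0 ≤ a i)
    (hs : Summable fun i : ℕ => a i / ((i + 1) * (i + 2))) (N : ℕ) :
    ∑ i ∈ Finset.range N, a i ≤ N * (N + 1) * ∑' i : ℕ, a i / ((i + 1) * (i + 2)) :=
  calc ∑ i ∈ Finset.range N, a i
      = ∑ i ∈ Finset.range N, ((i : ℝ) + 1) * (i + 2) * (a i / ((i + 1) * (i + 2))) :=
        Finset.sum_congr rfl fun i _ => by field_simp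
    _ ≤ ∑ i ∈ Finset.range N, (N : ℝ) * (N + 1) * (a i / ((i + 1) * (i + 2))) := by
        refine Finset.sum_le_sum fun i hi => ?_
        have hiN : (i : ℝ) + 1 ≤ N := by exact_mod_cast Finset.mem_range.1 hi
        exact mul_le_mul_of_nonneg_right (mul_le_mul hiN (by linarith) (by positivity)
          (by positivity)) (div_nonneg (ha i) (by positivity))
    _ = N * (N + 1) * ∑ i ∈ Finset.range N, a i / ((i + 1) * (i + 2)) :=
        (Finset.mul_sum ..).symm
    _ ≤ N * (N + 1) * ∑' i : ℕ, a i / ((i + 1) * (i + 2)) := by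
        gcongr
        exact hs.sum_le_tsum _ fun i _ => div_nonneg (ha i) (by positivity)

section WeightedEntropy

variable {Ω A : Type*} [MeasurableSpace Ω] [MeasurableSpace A] [MeasurableSingletonClass A]
  [Countable A] {μ : Measure Ω} [IsProbabilityMeasure μ] {X : ℤ → Ω → A}

theorem sum_range_exp_neg_condMinEntropy_le (hX : ∀ i, Measurable (X i)) (k N : ℕ) :
    ∑ d ∈ Finset.range N, Real.exp (-condMinEntropy μ X k (d + 1)) ≤
      N * (N + 1) * Real.exp (-weightedCondEntropy μ X k) := by
  have hs : Summable fun i : ℕ =>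
      Real.exp (-condMinEntropy μ X k (i + 1)) / ((i + 1) * (i + 2)) :=
    summable_one_div_add_one_mul_add_two.of_nonneg_of_le (fun i => by positivity) fun i => by
      gcongr
      exact exp_neg_condMinEntropy_le_one μ hX k (i + 1)
  refine (sum_range_le_mul_tsum_div (fun _ => (Real.exp_pos _).le) hs N).trans ?_
  rw [weightedCondEntropy, neg_neg]
  gcongr
  exact Real.le_exp_log _

theorem measure_repTime_le_le_exp_neg_weightedCondEntropy {T : Ω → Ω}
    (hX : ∀ i, Measurable (X i)) (hT : MeasurePreserving T μ μ)
    (hshift : ∀ i ω, X i (T ω) = X (i + 1) ω) (k N : ℕ) :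
    μ {ω | repTime X k ω ≤ N} ≤
      ENNReal.ofReal (N ^ 2 * (N + 1) * Real.exp (-weightedCondEntropy μ X k)) :=
  calc μ {ω | repTime X k ω ≤ N}
      ≤ N * ∑ d ∈ Finset.range N, μ (matchEvent X (d + 1) 0 k) :=
        measure_repTime_le_le_sum_measure_matchEvent hX hT hshift k N
    _ ≤ N * ∑ d ∈ Finset.range N,
          ENNReal.ofReal (Real.exp (-condMinEntropy μ X k (d + 1))) := by
        gcongr with d
        exact (measure_matchEvent_le_condGuessProb μ X d.succ_pos k).trans
          (condGuessProb_le_ofReal_exp_neg_condMinEntropy μ hX k _)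
    _ = ENNReal.ofReal
          (N * ∑ d ∈ Finset.range N, Real.exp (-condMinEntropy μ X k (d + 1))) := by
        rw [ENNReal.ofReal_mul N.cast_nonneg, ENNReal.ofReal_natCast,
          ENNReal.ofReal_sum_of_nonneg fun _ _ => (Real.exp_pos _).le]
    _ ≤ ENNReal.ofReal (N ^ 2 * (N + 1) * Real.exp (-weightedCondEntropy μ X k)) := by
        refine ENNReal.ofReal_le_ofReal ?_
        calc _ ≤ (N : ℝ) * (N * (N + 1) * Real.exp (-weightedCondEntropy μ X k)) := by
              gcongr
              exact sum_range_exp_neg_condMinEntropy_le hX k N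
          _ = _ := by ring

end WeightedEntropy

theorem natFloor_sq_mul_natFloor_add_one_le {r : ℝ} (hr : 0 ≤ r) :
    (⌊r⌋₊ : ℝ) ^ 2 * (⌊r⌋₊ + 1) ≤ 2 * r ^ 3 := by
  have hN := Nat.floor_le hr
  rcases Nat.eq_zero_or_pos ⌊r⌋₊ with h0 | hpos
  · rw [h0, Nat.cast_zero]
    norm_num
    positivity
  · have h1 : (1 : ℝ) ≤ ⌊r⌋₊ := by exact_mod_cast hpos
    calc (⌊r⌋₊ : ℝ) ^ 2 * (⌊r⌋₊ + 1) ≤ r ^ 2 * (2 * r) := by gcongr; linarith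
      _ = 2 * r ^ 3 := by ring

theorem ENat.le_natFloor_of_toENNReal_le_ofReal {n : ℕ∞} {r : ℝ}
    (h : (n : ℝ≥0∞) ≤ ENNReal.ofReal r) : n ≤ ⌊r⌋₊ := by
  induction n with
  | top => exact absurd (top_le_iff.1 h) ENNReal.ofReal_ne_top
  | coe n =>
    rw [ENat.toENNReal_coe] at h
    rcases eq_or_ne n 0 with rfl | hn
    · simp
    · exact_mod_cast Nat.le_floor ((ENNReal.natCast_le_ofReal hn).1 h)

theorem ae_eventually_ofReal_lt_of_measure_le {Ω : Type*} [MeasurableSpace Ω]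
    {μ : Measure Ω} {R : ℕ → Ω → ℕ∞} {r c : ℕ → ℝ} (hr : ∀ k, 0 ≤ r k) (hc : ∀ k, 0 ≤ c k)
    (hR : ∀ k (N : ℕ), μ {ω | R k ω ≤ N} ≤ ENNReal.ofReal ((N : ℝ) ^ 2 * (N + 1) * c k))
    (hsum : Summable fun k => r k ^ 3 * c k) :
    ∀ᵐ ω ∂μ, ∀ᶠ k in atTop, ENNReal.ofReal (r k) < (R k ω : ℝ≥0∞) := by
  have hbad : ∀ k, μ {ω | (R k ω : ℝ≥0∞) ≤ ENNReal.ofReal (r k)} ≤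
      ENNReal.ofReal (2 * (r k ^ 3 * c k)) := fun k =>
    calc _ ≤ μ {ω | R k ω ≤ ⌊r k⌋₊} :=
          measure_mono fun _ => ENat.le_natFloor_of_toENNReal_le_ofReal
      _ ≤ _ := (hR k _).trans <| ENNReal.ofReal_le_ofReal <| by
          rw [← mul_assoc]
          exact mul_le_mul_of_nonneg_right (natFloor_sq_mul_natFloor_add_one_le (hr k)) (hc k)
  have hfin : ∑' k, μ {ω | (R k ω : ℝ≥0∞) ≤ ENNReal.ofReal (r k)} ≠ ⊤ := by
    refine ne_top_of_le_ne_top ?_ (ENNReal.tsum_le_tsum hbad)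
    rw [← ENNReal.ofReal_tsum_of_nonneg (fun k => by have := hr k; have := hc k; positivity)
      (hsum.mul_left 2)]
    exact ENNReal.ofReal_ne_top
  rw [ae_iff]
  simpa only [Filter.not_eventually, not_lt] using measure_setOfPred_frequently_eq_zero hfin

/-- **Proposition 3.** For a stationary process over a countable alphabet and summable
positive `(ρ_k)`, almost surely for all sufficiently large `k`,
`log R⁽²⁾_k > (1/3) H_•(X₁^k|X_{k+1}^∞) + (1/3) log ρ_k`, i.e.
`R⁽²⁾_k > exp((1/3) H_•(X₁^k|X_{k+1}^∞) + (1/3) log ρ_k)` (also when `R⁽²⁾_k = ∞`). -/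
theorem sandwich_repetition_lower {Ω A : Type*} [MeasurableSpace Ω] [MeasurableSpace A]
    [MeasurableSingletonClass A] [Countable A]
    (μ : Measure Ω) [IsProbabilityMeasure μ] (X : ℤ → Ω → A) (hXmeas : ∀ i, Measurable (X i))
    (T : Ω → Ω) (hT : MeasurePreserving T μ μ) (hshift : ∀ i ω, X i (T ω) = X (i + 1) ω)
    (ρ : ℕ → ℝ) (hρpos : ∀ k, 0 < ρ k) (hρ : Summable ρ) :
    ∀ᵐ ω ∂μ, ∀ᶠ k : ℕ in atTop,
      ENNReal.ofReal
          (Real.exp (1 / 3 * weightedCondEntropy μ X k + 1 / 3 * Real.log (ρ k)))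
        < ((repTime X k ω : ℕ∞) : ℝ≥0∞) := by
  refine ae_eventually_ofReal_lt_of_measure_le (fun _ => (Real.exp_pos _).le)
    (fun k => (Real.exp_pos (-weightedCondEntropy μ X k)).le)
    (measure_repTime_le_le_exp_neg_weightedCondEntropy hXmeas hT hshift) ?_
  convert hρ using 2 with k
  rw [← Real.exp_nat_mul, ← Real.exp_add]
  convert Real.exp_log (hρpos k) using 2
  push_cast
  ring
end

section
/- Let (X_i)_{i∈ℤ} be a stationary process over a countable alphabet. For every k ≥ 1 and i ≥ 1, the conditional min-entropies satisfy 0 ≤ H_∞(X₁^k | X_{k+1}^{k+i-1}) - H_∞(X₁^k | X_{k+1}^{k+i}) ≤ H₀(X_j), where H₀(X_j) is the Hartley entropy of a single symbol. -/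
open MeasureTheory ProbabilityTheory Filter Set
open scoped ENNReal NNReal

/-!
Write `S_n = ∑_y max_x P(X_1^k = x, X_{k+1}^{k+n} = y)`, so that
`H_∞(X_1^k | X_{k+1}^{k+n}) = -log S_n`. Appending one symbol `a` to the context splits each
joint probability into a countable sum over `a`; since a maximum of sums is at most the sum of
the maxima, `S_n ≤ S_{n+1}`. Conversely, each summand of `S_{n+1}` with a fixed `a` is at most
the corresponding summand of `S_n`, and only the `a` in the support of `X_{k+n+1}` contribute,
so `S_{n+1} ≤ card (supp X_{k+n+1}) · S_n`. By stationarity that support does not depend on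
the index.
-/

lemma identDistrib_of_measurePreserving_shift {Ω A : Type*} [MeasurableSpace Ω]
    [MeasurableSpace A] {μ : Measure Ω} {X : ℤ → Ω → A} (hX : ∀ i, Measurable (X i))
    {T : Ω → Ω} (hT : MeasurePreserving T μ μ) (hshift : ∀ i ω, X i (T ω) = X (i + 1) ω)
    (i j : ℤ) : IdentDistrib (X i) (X j) μ μ := by
  have hstep (t : ℤ) : IdentDistrib (X (t + 1)) (X t) μ μ := by
    have hcomp : X (t + 1) = X t ∘ T := funext fun ω => (hshift t ω).symm
    refine ⟨(hX _).aemeasurable, (hX t).aemeasurable, ?_⟩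
    rw [hcomp, ← Measure.map_map (hX t) hT.measurable, hT.map_eq]
  have hzero (t : ℤ) : IdentDistrib (X t) (X 0) μ μ := by
    induction t using Int.induction_on with
    | zero => exact IdentDistrib.refl (hX 0).aemeasurable
    | succ t ih => exact (hstep t).trans ih
    | pred t ih => exact (hstep (-t - 1)).symm.trans (by simpa using ih)
  exact (hzero i).trans (hzero j).symm

section Blocks

variable {Ω A : Type*}

def blockPair (X : ℤ → Ω → A) (k n : ℕ) (ω : Ω) : (Fin k → A) × (Fin n → A) :=
  (fun m => X (1 + (m : ℤ)) ω, fun m => X ((k : ℤ) + 1 + (m : ℤ)) ω)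

lemma preimage_blockPair_singleton (X : ℤ → Ω → A) (k n : ℕ) (x : Fin k → A)
    (y : Fin n → A) :
    blockPair X k n ⁻¹' {(x, y)} = {ω | (∀ m : Fin k, X (1 + (m : ℤ)) ω = x m) ∧
      ∀ m : Fin n, X ((k : ℤ) + 1 + (m : ℤ)) ω = y m} := by
  ext ω
  simp [blockPair, funext_iff]

lemma preimage_blockPair_snoc (X : ℤ → Ω → A) (k n : ℕ) (x : Fin k → A) (y : Fin n → A)
    (a : A) :
    blockPair X k (n + 1) ⁻¹' {(x, Fin.snoc y a)} =
      blockPair X k n ⁻¹' {(x, y)} ∩ X ((k : ℤ) + 1 + n) ⁻¹' {a} := by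
  ext ω
  simp [blockPair, funext_iff, Fin.forall_fin_succ', and_assoc]

variable [MeasurableSpace Ω]

/-- The guessing probability `exp (-H_∞(X_1^k | X_{k+1}^{k+n}))`. -/
noncomputable def guessingProb (μ : Measure Ω) (X : ℤ → Ω → A) (k n : ℕ) : ℝ≥0∞ :=
  ∑' y : Fin n → A, ⨆ x : Fin k → A, μ (blockPair X k n ⁻¹' {(x, y)})

lemma condMinEntropy_eq_neg_log_guessingProb (μ : Measure Ω) [IsFiniteMeasure μ]
    (X : ℤ → Ω → A) (k n : ℕ) :
    condMinEntropy μ X k n = -Real.log (guessingProb μ X k n).toReal := by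
  have hfin (y : Fin n → A) : ⨆ x : Fin k → A, μ (blockPair X k n ⁻¹' {(x, y)}) ≠ ∞ :=
    ne_top_of_le_ne_top (measure_ne_top μ univ) (iSup_le fun _ => measure_mono (subset_univ _))
  rw [guessingProb, ENNReal.tsum_toReal_eq hfin]
  simp only [ENNReal.toReal_iSup fun _ => measure_ne_top μ _, preimage_blockPair_singleton]
  rfl

lemma guessingProb_succ (μ : Measure Ω) (X : ℤ → Ω → A) (k n : ℕ) :
    guessingProb μ X k (n + 1) =
      ∑' (y : Fin n → A) (a : A), ⨆ x : Fin k → A,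
        μ (blockPair X k (n + 1) ⁻¹' {(x, Fin.snoc y a)}) := by
  rw [guessingProb, ← (Fin.snocEquiv fun _ => A).tsum_eq, ENNReal.tsum_prod', ENNReal.tsum_comm]
  rfl

lemma guessingProb_succ_le_encard_mul (μ : Measure Ω) (X : ℤ → Ω → A) (k n : ℕ) :
    guessingProb μ X k (n + 1) ≤
      {a : A | μ (X ((k : ℤ) + 1 + n) ⁻¹' {a}) ≠ 0}.encard * guessingProb μ X k n := by
  set s := {a : A | μ (X ((k : ℤ) + 1 + n) ⁻¹' {a}) ≠ 0}
  rw [guessingProb_succ, guessingProb, ← ENNReal.tsum_mul_left]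
  refine ENNReal.tsum_le_tsum fun y => ?_
  set c := ⨆ x : Fin k → A, μ (blockPair X k n ⁻¹' {(x, y)})
  have hsupp (a : A) :
      ⨆ x : Fin k → A, μ (blockPair X k (n + 1) ⁻¹' {(x, Fin.snoc y a)}) ≤
        s.indicator (fun _ => c) a := by
    refine iSup_le fun x => ?_
    rw [preimage_blockPair_snoc]
    by_cases ha : a ∈ s
    · rw [indicator_of_mem ha]
      exact (measure_mono inter_subset_left).trans (le_iSup_of_le x le_rfl)
    · rw [indicator_of_notMem ha]
      exact (measure_mono inter_subset_right).trans (not_not.mp ha).le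
  calc _ ≤ ∑' a, s.indicator (fun _ => c) a := ENNReal.tsum_le_tsum hsupp
    _ = s.encard * c := by rw [← tsum_subtype, ENNReal.tsum_set_const]

variable [Countable A]

lemma guessingProb_le_succ (μ : Measure Ω) (X : ℤ → Ω → A) (k n : ℕ) :
    guessingProb μ X k n ≤ guessingProb μ X k (n + 1) := by
  rw [guessingProb_succ]
  refine ENNReal.tsum_le_tsum fun y => iSup_le fun x => ?_
  calc μ (blockPair X k n ⁻¹' {(x, y)})
      = μ (⋃ a, blockPair X k (n + 1) ⁻¹' {(x, Fin.snoc y a)}) := by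
        simp only [preimage_blockPair_snoc, ← inter_iUnion, ← preimage_iUnion,
          iUnion_of_singleton, preimage_univ, inter_univ]
    _ ≤ ∑' a, μ (blockPair X k (n + 1) ⁻¹' {(x, Fin.snoc y a)}) := measure_iUnion_le _
    _ ≤ _ := ENNReal.tsum_le_tsum fun a => le_iSup_of_le x le_rfl

variable [MeasurableSpace A] [MeasurableSingletonClass A]

lemma tsum_measure_preimage_blockPair (μ : Measure Ω) [IsProbabilityMeasure μ]
    {X : ℤ → Ω → A} (hX : ∀ i, Measurable (X i)) (k n : ℕ) :
    ∑' p, μ (blockPair X k n ⁻¹' {p}) = 1 := by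
  have hmeas : Measurable (blockPair X k n) :=
    (measurable_pi_lambda _ fun _ => hX _).prodMk (measurable_pi_lambda _ fun _ => hX _)
  rw [← tsum_univ, tsum_measure_preimage_singleton countable_univ
    fun _ _ => hmeas (measurableSet_singleton _), preimage_univ, measure_univ]

lemma guessingProb_le_one (μ : Measure Ω) [IsProbabilityMeasure μ]
    {X : ℤ → Ω → A} (hX : ∀ i, Measurable (X i)) (k n : ℕ) :
    guessingProb μ X k n ≤ 1 :=
  calc guessingProb μ X k n
      ≤ ∑' (y : Fin n → A) (x : Fin k → A), μ (blockPair X k n ⁻¹' {(x, y)}) :=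
        ENNReal.tsum_le_tsum fun y => iSup_le fun x => ENNReal.le_tsum x
    _ = 1 := by
        rw [ENNReal.tsum_comm, ← ENNReal.tsum_prod' (f := fun p => μ (blockPair X k n ⁻¹' {p})),
          tsum_measure_preimage_blockPair μ hX]

lemma guessingProb_ne_top (μ : Measure Ω) [IsProbabilityMeasure μ]
    {X : ℤ → Ω → A} (hX : ∀ i, Measurable (X i)) (k n : ℕ) :
    guessingProb μ X k n ≠ ∞ :=
  ne_top_of_le_ne_top ENNReal.one_ne_top (guessingProb_le_one μ hX k n)

lemma guessingProb_ne_zero (μ : Measure Ω) [IsProbabilityMeasure μ]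
    {X : ℤ → Ω → A} (hX : ∀ i, Measurable (X i)) (k n : ℕ) :
    guessingProb μ X k n ≠ 0 := by
  intro h
  have hzero (x : Fin k → A) (y : Fin n → A) : μ (blockPair X k n ⁻¹' {(x, y)}) = 0 :=
    ENNReal.iSup_eq_zero.1 (ENNReal.tsum_eq_zero.1 h y) x
  simpa [ENNReal.tsum_prod', hzero] using tsum_measure_preimage_blockPair μ hX k n

lemma ofReal_exp_condMinEntropy (μ : Measure Ω) [IsProbabilityMeasure μ]
    {X : ℤ → Ω → A} (hX : ∀ i, Measurable (X i)) (k n : ℕ) :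
    ENNReal.ofReal (Real.exp (condMinEntropy μ X k n)) = (guessingProb μ X k n)⁻¹ := by
  have hne_zero := guessingProb_ne_zero μ hX k n
  rw [condMinEntropy_eq_neg_log_guessingProb, Real.exp_neg,
    Real.exp_log (ENNReal.toReal_pos hne_zero (guessingProb_ne_top μ hX k n)),
    ← ENNReal.toReal_inv, ENNReal.ofReal_toReal (ENNReal.inv_ne_top.2 hne_zero)]

end Blocks

/-- The upper bound is stated in exponentiated form so that it stays meaningful when the
support of a single symbol is infinite. -/
theorem condMinEntropy_succ_diff_general {Ω A : Type*} [MeasurableSpace Ω] [MeasurableSpace A]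
    [MeasurableSingletonClass A] [Countable A]
    (μ : Measure Ω) [IsProbabilityMeasure μ] (X : ℤ → Ω → A) (hXmeas : ∀ i, Measurable (X i))
    (T : Ω → Ω) (hT : MeasurePreserving T μ μ) (hshift : ∀ i ω, X i (T ω) = X (i + 1) ω)
    (k i : ℕ) (hi : 1 ≤ i) (j : ℤ) :
    condMinEntropy μ X k i ≤ condMinEntropy μ X k (i - 1) ∧
    ENNReal.ofReal (Real.exp (condMinEntropy μ X k (i - 1)))
      ≤ ENNReal.ofReal (Real.exp (condMinEntropy μ X k i))
          * (({a : A | μ {ω | X j ω = a} ≠ 0}.encard : ℕ∞) : ℝ≥0∞) := by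
  obtain ⟨n, rfl⟩ : ∃ n, i = n + 1 := ⟨i - 1, by omega⟩
  have hsupp :
      {a : A | μ (X ((k : ℤ) + 1 + n) ⁻¹' {a}) ≠ 0} = {a : A | μ {ω | X j ω = a} ≠ 0} := by
    ext a
    exact not_congr <| Eq.congr_left <|
      (identDistrib_of_measurePreserving_shift hXmeas hT hshift _ j).measure_mem_eq
        (measurableSet_singleton a)
  have hne_zero := guessingProb_ne_zero μ hXmeas k
  have hne_top := guessingProb_ne_top μ hXmeas k
  rw [Nat.add_sub_cancel, ← Real.exp_le_exp, ← ENNReal.ofReal_le_ofReal_iff (Real.exp_pos _).le,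
    ofReal_exp_condMinEntropy μ hXmeas, ofReal_exp_condMinEntropy μ hXmeas, ← hsupp]
  refine ⟨ENNReal.inv_le_inv' (guessingProb_le_succ μ X k n), ?_⟩
  rw [mul_comm, ← div_eq_mul_inv,
    ENNReal.le_div_iff_mul_le (.inl (hne_zero _)) (.inl (hne_top _)),
    ENNReal.inv_mul_le_iff (hne_zero _) (hne_top _), mul_comm]
  exact guessingProb_succ_le_encard_mul μ X k n

/-- For a stationary process over a countable alphabet, for `k, i ≥ 1`,
`0 ≤ H_∞(X₁^k | X_{k+1}^{k+i-1}) - H_∞(X₁^k | X_{k+1}^{k+i}) ≤ H₀(X_j)`, where `H₀(X_j)`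
is the Hartley entropy of a single symbol.  The right inequality is stated in the
equivalent exponentiated form
`e^{H_∞(X₁^k|X_{k+1}^{k+i-1})} ≤ e^{H_∞(X₁^k|X_{k+1}^{k+i})} · card {a : P(X_j = a) > 0}`,
which is also meaningful when the support of a single symbol is infinite. -/
theorem condMinEntropy_succ_diff {Ω A : Type*} [MeasurableSpace Ω] [MeasurableSpace A]
    [MeasurableSingletonClass A] [Countable A]
    (μ : Measure Ω) [IsProbabilityMeasure μ] (X : ℤ → Ω → A) (hXmeas : ∀ i, Measurable (X i))
    (T : Ω → Ω) (hT : MeasurePreserving T μ μ) (hshift : ∀ i ω, X i (T ω) = X (i + 1) ω)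
    (k i : ℕ) (hk : 1 ≤ k) (hi : 1 ≤ i) (j : ℤ) :
    condMinEntropy μ X k i ≤ condMinEntropy μ X k (i - 1) ∧
    ENNReal.ofReal (Real.exp (condMinEntropy μ X k (i - 1)))
      ≤ ENNReal.ofReal (Real.exp (condMinEntropy μ X k i))
          * (({a : A | μ {ω | X j ω = a} ≠ 0}.encard : ℕ∞) : ℝ≥0∞) :=
  condMinEntropy_succ_diff_general μ X hXmeas T hT hshift k i hi j
end
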